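/- arXiv:2604.04463 — 8 statements merged into one kernel-verified Lean document; each statement's English description precedes it below -/
import Mathlib

section
/- For every i ∈ {0,1,2,3,4,5} and every 12-tuple y = (y_1,…,y_12) of nonzero complex numbers with y_{2i+1} ≠ −1 and y_{2i+2} ≠ −1, the transformation r_i satisfies r_i(r_i(y)) = y (in particular r_i(y) again consists of nonzero numbers with (r_i(y))_{2i+1} ≠ −1 and (r_i(y))_{2i+2} ≠ −1, so the composition is defined). -/
noncomputable section

/-- The birational transformation `r_i` attached to the quiver `Q_12` of the
`q`-Garnier system of fourth order, acting on 12-tuples of complex numbers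
(indices read modulo 12). -/
def rG (i : ZMod 6) (y : ZMod 12 → ℂ) : ZMod 12 → ℂ := fun j =>
  let p : ZMod 12 := ((2 * i.val : ℕ) : ZMod 12)
  if j = p - 1 then y (p - 1) * y (p + 2) * (1 + y (p + 1)) / (1 + y (p + 2))
  else if j = p then y p * y (p + 1) * (1 + y (p + 2)) / (1 + y (p + 1))
  else if j = p + 1 then 1 / y (p + 2)
  else if j = p + 2 then 1 / y (p + 1)
  else if j = p + 3 then y (p + 1) * y (p + 3) * (1 + y (p + 2)) / (1 + y (p + 1))
  else if j = p + 4 then y (p + 2) * y (p + 4) * (1 + y (p + 1)) / (1 + y (p + 2))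
  else y j

/-- Genericity (all denominators of `r_i` nonzero and all coordinates nonzero). -/
def RG (i : ZMod 6) (y : ZMod 12 → ℂ) : Prop :=
  (∀ j, y j ≠ 0) ∧
    1 + y (((2 * i.val + 1 : ℕ) : ZMod 12)) ≠ 0 ∧
    1 + y (((2 * i.val + 2 : ℕ) : ZMod 12)) ≠ 0

def rP (p : ZMod 12) (y : ZMod 12 → ℂ) : ZMod 12 → ℂ := fun j =>
  if j = p - 1 then y (p - 1) * y (p + 2) * (1 + y (p + 1)) / (1 + y (p + 2))
  else if j = p then y p * y (p + 1) * (1 + y (p + 2)) / (1 + y (p + 1))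
  else if j = p + 1 then 1 / y (p + 2)
  else if j = p + 2 then 1 / y (p + 1)
  else if j = p + 3 then y (p + 1) * y (p + 3) * (1 + y (p + 2)) / (1 + y (p + 1))
  else if j = p + 4 then y (p + 2) * y (p + 4) * (1 + y (p + 1)) / (1 + y (p + 2))
  else y j

lemma hne (p : ZMod 12) {a b : ZMod 12} (h : a ≠ b) : p + a ≠ p + b := by
  simpa using h

lemma hsub (p : ZMod 12) : p - 1 = p + 11 := by
  rw [sub_eq_add_neg]; congr 1

section
variable (p : ZMod 12) (y : ZMod 12 → ℂ)

lemma V1 : rP p y (p - 1) = y (p - 1) * y (p + 2) * (1 + y (p + 1)) / (1 + y (p + 2)) := by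
  simp only [rP, if_true]

lemma V2 : rP p y p = y p * y (p + 1) * (1 + y (p + 2)) / (1 + y (p + 1)) := by
  simp only [rP]
  rw [if_neg (by rw [hsub]; simpa using hne p (show (0:ZMod 12) ≠ 11 by decide)), if_true]

lemma V3 : rP p y (p + 1) = 1 / y (p + 2) := by
  simp only [rP]
  rw [if_neg (by rw [hsub]; exact hne p (by decide)),
      if_neg (by simpa using hne p (show (1:ZMod 12) ≠ 0 by decide)), if_true]

lemma V4 : rP p y (p + 2) = 1 / y (p + 1) := by
  simp only [rP]
  rw [if_neg (by rw [hsub]; exact hne p (by decide)),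
      if_neg (by simpa using hne p (show (2:ZMod 12) ≠ 0 by decide)),
      if_neg (hne p (by decide)), if_true]

lemma V5 : rP p y (p + 3) = y (p + 1) * y (p + 3) * (1 + y (p + 2)) / (1 + y (p + 1)) := by
  simp only [rP]
  rw [if_neg (by rw [hsub]; exact hne p (by decide)),
      if_neg (by simpa using hne p (show (3:ZMod 12) ≠ 0 by decide)),
      if_neg (hne p (by decide)), if_neg (hne p (by decide)), if_true]

lemma V6 : rP p y (p + 4) = y (p + 2) * y (p + 4) * (1 + y (p + 1)) / (1 + y (p + 2)) := by
  simp only [rP]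
  rw [if_neg (by rw [hsub]; exact hne p (by decide)),
      if_neg (by simpa using hne p (show (4:ZMod 12) ≠ 0 by decide)),
      if_neg (hne p (by decide)), if_neg (hne p (by decide)),
      if_neg (hne p (by decide)), if_true]

lemma V7 (j : ZMod 12) (e1 : j ≠ p - 1) (e2 : j ≠ p) (e3 : j ≠ p + 1) (e4 : j ≠ p + 2)
    (e5 : j ≠ p + 3) (e6 : j ≠ p + 4) : rP p y j = y j := by
  simp only [rP]
  rw [if_neg e1, if_neg e2, if_neg e3, if_neg e4, if_neg e5, if_neg e6]

end

theorem rP_key (p : ZMod 12) (y : ZMod 12 → ℂ) (hy : ∀ j, y j ≠ 0)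
    (hA : 1 + y (p + 1) ≠ 0) (hB : 1 + y (p + 2) ≠ 0) :
    (∀ j, rP p y j ≠ 0) ∧ rP p y (p + 1) ≠ -1 ∧ rP p y (p + 2) ≠ -1 ∧
      rP p (rP p y) = y := by
  have hy1 := hy (p + 1)
  have hy2 := hy (p + 2)
  refine ⟨?_, ?_, ?_, ?_⟩
  · intro j
    by_cases e1 : j = p - 1
    · subst e1; rw [V1]; exact div_ne_zero (mul_ne_zero (mul_ne_zero (hy _) (hy _)) hA) hB
    by_cases e2 : j = p
    · subst e2; rw [V2]; exact div_ne_zero (mul_ne_zero (mul_ne_zero (hy _) (hy _)) hB) hA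
    by_cases e3 : j = p + 1
    · subst e3; rw [V3]; exact one_div_ne_zero (hy _)
    by_cases e4 : j = p + 2
    · subst e4; rw [V4]; exact one_div_ne_zero (hy _)
    by_cases e5 : j = p + 3
    · subst e5; rw [V5]; exact div_ne_zero (mul_ne_zero (mul_ne_zero (hy _) (hy _)) hB) hA
    by_cases e6 : j = p + 4
    · subst e6; rw [V6]; exact div_ne_zero (mul_ne_zero (mul_ne_zero (hy _) (hy _)) hA) hB
    · rw [V7 p y j e1 e2 e3 e4 e5 e6]; exact hy j
  · rw [V3]
    intro h
    apply hB
    field_simp at h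
    linear_combination h
  · rw [V4]
    intro h
    apply hA
    field_simp at h
    linear_combination h
  · have c1 : 1 + 1 / y (p + 1) = (1 + y (p + 1)) / y (p + 1) := by field_simp; ring
    have c2 : 1 + 1 / y (p + 2) = (1 + y (p + 2)) / y (p + 2) := by field_simp; ring
    funext j
    by_cases e1 : j = p - 1
    · subst e1
      rw [V1 p (rP p y), V1 p y, V3 p y, V4 p y, c1, c2]
      field_simp
    by_cases e2 : j = p
    · rw [e2]
      rw [V2 p (rP p y), V2 p y, V3 p y, V4 p y, c1, c2]
      field_simp
    by_cases e3 : j = p + 1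
    · subst e3
      rw [V3 p (rP p y), V4 p y, one_div_one_div]
    by_cases e4 : j = p + 2
    · subst e4
      rw [V4 p (rP p y), V3 p y, one_div_one_div]
    by_cases e5 : j = p + 3
    · subst e5
      rw [V5 p (rP p y), V5 p y, V3 p y, V4 p y, c1, c2]
      field_simp
    by_cases e6 : j = p + 4
    · subst e6
      rw [V6 p (rP p y), V6 p y, V3 p y, V4 p y, c1, c2]
      field_simp
    · rw [V7 p (rP p y) j e1 e2 e3 e4 e5 e6, V7 p y j e1 e2 e3 e4 e5 e6]

/-- For every `i ∈ {0,…,5}` and every 12-tuple `y` of nonzero complex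
numbers with `y_{2i+1} ≠ -1` and `y_{2i+2} ≠ -1`, the transformation `r_i` satisfies
`r_i(r_i(y)) = y`; in particular `r_i(y)` again consists of nonzero numbers with
`(r_i(y))_{2i+1} ≠ -1` and `(r_i(y))_{2i+2} ≠ -1`, so the composition is defined. -/
theorem rG_involutive (i : ZMod 6) (y : ZMod 12 → ℂ)
    (hy : ∀ j, y j ≠ 0)
    (h1 : y (((2 * i.val + 1 : ℕ) : ZMod 12)) ≠ -1)
    (h2 : y (((2 * i.val + 2 : ℕ) : ZMod 12)) ≠ -1) :
    (∀ j, rG i y j ≠ 0) ∧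
      rG i y (((2 * i.val + 1 : ℕ) : ZMod 12)) ≠ -1 ∧
      rG i y (((2 * i.val + 2 : ℕ) : ZMod 12)) ≠ -1 ∧
      rG i (rG i y) = y := by
  have hgp : rG i = rP ((2 * i.val : ℕ) : ZMod 12) := rfl
  have e1 : ((2 * i.val + 1 : ℕ) : ZMod 12) = ((2 * i.val : ℕ) : ZMod 12) + 1 := by
    push_cast; ring
  have e2 : ((2 * i.val + 2 : ℕ) : ZMod 12) = ((2 * i.val : ℕ) : ZMod 12) + 2 := by
    push_cast; ring
  rw [e1] at h1
  rw [e2] at h2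
  have hA : 1 + y (((2 * i.val : ℕ) : ZMod 12) + 1) ≠ 0 := fun h => h1 (by linear_combination h)
  have hB : 1 + y (((2 * i.val : ℕ) : ZMod 12) + 2) ≠ 0 := fun h => h2 (by linear_combination h)
  rw [hgp, e1, e2]
  exact rP_key _ y hy hA hB
end
end

section
/- For every i ∈ {0,…,5} and every 12-tuple y of nonzero complex numbers with y_{2i+1} ≠ −1 and y_{2i+2} ≠ −1: α_i(r_i(y)) = α_i(y)^{-1}; α_{i−1}(r_i(y)) = α_{i−1}(y)·α_i(y) and α_{i+1}(r_i(y)) = α_{i+1}(y)·α_i(y) (indices of α mod 6); α_j(r_i(y)) = α_j(y) for j ≢ i−1, i, i+1 (mod 6); β_0(r_i(y)) = β_0(y), β_1(r_i(y)) = β_1(y), β'_0(r_i(y)) = β'_0(y), β'_1(r_i(y)) = β'_1(y), and q(r_i(y)) = q(y). Equivalently, r_i acts on the simple roots by r_i(α_j) = α_j α_i^{−a_{i,j}} where (a_{i,j}) is the generalized Cartan matrix of type A_5^{(1)}, and fixes β_0, β_1, β'_0, β'_1 and the null root q. -/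
noncomputable section

/-- The simple root `α_i(y) = y_{2i+1} y_{2i+2}` (indices mod 12, `i` mod 6). -/
def alC (i : ZMod 6) (y : ZMod 12 → ℂ) : ℂ :=
  y (((2 * i.val + 1 : ℕ) : ZMod 12)) * y (((2 * i.val + 2 : ℕ) : ZMod 12))

/-- The simple root `β_0(y) = y_1 y_4 y_5 y_8 y_9 y_12`. -/
def b0C (y : ZMod 12 → ℂ) : ℂ := y 1 * y 4 * y 5 * y 8 * y 9 * y 12

/-- The simple root `β_1(y) = y_2 y_3 y_6 y_7 y_10 y_11`. -/
def b1C (y : ZMod 12 → ℂ) : ℂ := y 2 * y 3 * y 6 * y 7 * y 10 * y 11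

/-- The simple root `β'_0(y) = y_1 y_3 y_5 y_7 y_9 y_11`. -/
def bp0C (y : ZMod 12 → ℂ) : ℂ := y 1 * y 3 * y 5 * y 7 * y 9 * y 11

/-- The simple root `β'_1(y) = y_2 y_4 y_6 y_8 y_10 y_12`. -/
def bp1C (y : ZMod 12 → ℂ) : ℂ := y 2 * y 4 * y 6 * y 8 * y 10 * y 12

/-- The null root `q(y) = y_1 y_2 ⋯ y_12`. -/
def nqC (y : ZMod 12 → ℂ) : ℂ :=
  y 1 * y 2 * y 3 * y 4 * y 5 * y 6 * y 7 * y 8 * y 9 * y 10 * y 11 * y 12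

private lemma v0 : (ZMod.val (0:ZMod 6)) = 0 := rfl
private lemma vm0 : (ZMod.val ((0:ZMod 6) - 1)) = 5 := rfl
private lemma vp0 : (ZMod.val ((0:ZMod 6) + 1)) = 1 := rfl
private lemma v1 : (ZMod.val (1:ZMod 6)) = 1 := rfl
private lemma vm1 : (ZMod.val ((1:ZMod 6) - 1)) = 0 := rfl
private lemma vp1 : (ZMod.val ((1:ZMod 6) + 1)) = 2 := rfl
private lemma v2 : (ZMod.val (2:ZMod 6)) = 2 := rfl
private lemma vm2 : (ZMod.val ((2:ZMod 6) - 1)) = 1 := rfl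
private lemma vp2 : (ZMod.val ((2:ZMod 6) + 1)) = 3 := rfl
private lemma v3 : (ZMod.val (3:ZMod 6)) = 3 := rfl
private lemma vm3 : (ZMod.val ((3:ZMod 6) - 1)) = 2 := rfl
private lemma vp3 : (ZMod.val ((3:ZMod 6) + 1)) = 4 := rfl
private lemma v4 : (ZMod.val (4:ZMod 6)) = 4 := rfl
private lemma vm4 : (ZMod.val ((4:ZMod 6) - 1)) = 3 := rfl
private lemma vp4 : (ZMod.val ((4:ZMod 6) + 1)) = 5 := rfl
private lemma v5 : (ZMod.val (5:ZMod 6)) = 5 := rfl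
private lemma vm5 : (ZMod.val ((5:ZMod 6) - 1)) = 4 := rfl
private lemma vp5 : (ZMod.val ((5:ZMod 6) + 1)) = 0 := rfl
private lemma c0 : (((0:Nat)):ZMod 12) = 0 := by decide
private lemma c1 : (((1:Nat)):ZMod 12) = 1 := by decide
private lemma c2 : (((2:Nat)):ZMod 12) = 2 := by decide
private lemma c3 : (((3:Nat)):ZMod 12) = 3 := by decide
private lemma c4 : (((4:Nat)):ZMod 12) = 4 := by decide
private lemma c5 : (((5:Nat)):ZMod 12) = 5 := by decide
private lemma c6 : (((6:Nat)):ZMod 12) = 6 := by decide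
private lemma c7 : (((7:Nat)):ZMod 12) = 7 := by decide
private lemma c8 : (((8:Nat)):ZMod 12) = 8 := by decide
private lemma c9 : (((9:Nat)):ZMod 12) = 9 := by decide
private lemma c10 : (((10:Nat)):ZMod 12) = 10 := by decide
private lemma c11 : (((11:Nat)):ZMod 12) = 11 := by decide
private lemma c12 : (((12:Nat)):ZMod 12) = 0 := by decide
private lemma c13 : (((13:Nat)):ZMod 12) = 1 := by decide
private lemma c14 : (((14:Nat)):ZMod 12) = 2 := by decide
private lemma c15 : (((15:Nat)):ZMod 12) = 3 := by decide
private lemma c12l : ((12):ZMod 12) = 0 := by decide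
private lemma n1l : ((-1):ZMod 12) = 11 := by decide
private lemma s0 : ((0:ZMod 12) - 1) = 11 := by decide
private lemma a0_1 : ((0:ZMod 12) + 1) = 1 := by decide
private lemma a0_2 : ((0:ZMod 12) + 2) = 2 := by decide
private lemma a0_3 : ((0:ZMod 12) + 3) = 3 := by decide
private lemma a0_4 : ((0:ZMod 12) + 4) = 4 := by decide
private lemma s2 : ((2:ZMod 12) - 1) = 1 := by decide
private lemma a2_1 : ((2:ZMod 12) + 1) = 3 := by decide
private lemma a2_2 : ((2:ZMod 12) + 2) = 4 := by decide
private lemma a2_3 : ((2:ZMod 12) + 3) = 5 := by decide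
private lemma a2_4 : ((2:ZMod 12) + 4) = 6 := by decide
private lemma s4 : ((4:ZMod 12) - 1) = 3 := by decide
private lemma a4_1 : ((4:ZMod 12) + 1) = 5 := by decide
private lemma a4_2 : ((4:ZMod 12) + 2) = 6 := by decide
private lemma a4_3 : ((4:ZMod 12) + 3) = 7 := by decide
private lemma a4_4 : ((4:ZMod 12) + 4) = 8 := by decide
private lemma s6 : ((6:ZMod 12) - 1) = 5 := by decide
private lemma a6_1 : ((6:ZMod 12) + 1) = 7 := by decide
private lemma a6_2 : ((6:ZMod 12) + 2) = 8 := by decide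
private lemma a6_3 : ((6:ZMod 12) + 3) = 9 := by decide
private lemma a6_4 : ((6:ZMod 12) + 4) = 10 := by decide
private lemma s8 : ((8:ZMod 12) - 1) = 7 := by decide
private lemma a8_1 : ((8:ZMod 12) + 1) = 9 := by decide
private lemma a8_2 : ((8:ZMod 12) + 2) = 10 := by decide
private lemma a8_3 : ((8:ZMod 12) + 3) = 11 := by decide
private lemma a8_4 : ((8:ZMod 12) + 4) = 0 := by decide
private lemma s10 : ((10:ZMod 12) - 1) = 9 := by decide
private lemma a10_1 : ((10:ZMod 12) + 1) = 11 := by decide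
private lemma a10_2 : ((10:ZMod 12) + 2) = 0 := by decide
private lemma a10_3 : ((10:ZMod 12) + 3) = 1 := by decide
private lemma a10_4 : ((10:ZMod 12) + 4) = 2 := by decide

private lemma hall6 : ∀ k : ZMod 6, k = 0 ∨ k = 1 ∨ k = 2 ∨ k = 3 ∨ k = 4 ∨ k = 5 := by decide

set_option maxHeartbeats 1600000 in
private lemma rGcase0 (y : ZMod 12 → ℂ) (hy : ∀ j, y j ≠ 0)
    (H1 : 1 + y 1 ≠ 0) (H2 : 1 + y 2 ≠ 0) :
    alC 0 (rG 0 y) = (alC 0 y)⁻¹ ∧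
      alC (0 - 1) (rG 0 y) = alC (0 - 1) y * alC 0 y ∧
      alC (0 + 1) (rG 0 y) = alC (0 + 1) y * alC 0 y ∧
      (∀ j : ZMod 6, j ≠ 0 - 1 → j ≠ 0 → j ≠ 0 + 1 → alC j (rG 0 y) = alC j y) ∧
      b0C (rG 0 y) = b0C y ∧
      b1C (rG 0 y) = b1C y ∧
      bp0C (rG 0 y) = bp0C y ∧
      bp1C (rG 0 y) = bp1C y ∧
      nqC (rG 0 y) = nqC y := by
  refine ⟨?_, ?_, ?_, ?_, ?_, ?_, ?_, ?_, ?_⟩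
  case refine_4 =>
    intro j hj1 hj2 hj3
    rcases hall6 j with rfl | rfl | rfl | rfl | rfl | rfl <;>
      first
        | exact absurd (by decide) hj1
        | exact absurd (by decide) hj2
        | exact absurd (by decide) hj3
        | (simp only [alC]; simp (config := { decide := true }) only [rG, if_true, if_false, Nat.reduceMul, Nat.reduceAdd, v0, vm0, vp0, v1, vm1, vp1, v2, vm2, vp2, v3, vm3, vp3, v4, vm4, vp4, v5, vm5, vp5, c0, c1, c2, c3, c4, c5, c6, c7, c8, c9, c10, c11, c12, c13, c14, c15, c12l, n1l, s0, a0_1, a0_2, a0_3, a0_4, s2, a2_1, a2_2, a2_3, a2_4, s4, a4_1, a4_2, a4_3, a4_4, s6, a6_1, a6_2, a6_3, a6_4, s8, a8_1, a8_2, a8_3, a8_4, s10, a10_1, a10_2, a10_3, a10_4])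
  all_goals
    simp only [alC, b0C, b1C, bp0C, bp1C, nqC]
    simp (config := { decide := true }) only [rG, if_true, if_false, Nat.reduceMul, Nat.reduceAdd, v0, vm0, vp0, v1, vm1, vp1, v2, vm2, vp2, v3, vm3, vp3, v4, vm4, vp4, v5, vm5, vp5, c0, c1, c2, c3, c4, c5, c6, c7, c8, c9, c10, c11, c12, c13, c14, c15, c12l, n1l, s0, a0_1, a0_2, a0_3, a0_4, s2, a2_1, a2_2, a2_3, a2_4, s4, a4_1, a4_2, a4_3, a4_4, s6, a6_1, a6_2, a6_3, a6_4, s8, a8_1, a8_2, a8_3, a8_4, s10, a10_1, a10_2, a10_3, a10_4]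
    try generalize hU : 1 + y 1 = U
    try rw [hU] at H1
    try generalize hV : 1 + y 2 = V
    try rw [hV] at H2
    try field_simp [hy 0, hy 1, hy 2, hy 3, hy 4, hy 5, hy 6, hy 7, hy 8, hy 9, hy 10, hy 11, H1, H2]
    try rw [div_eq_iff (by simp [hy 0, hy 1, hy 2, hy 3, hy 4, hy 5, hy 6, hy 7, hy 8, hy 9, hy 10, hy 11, H1, H2, pow_ne_zero])]
    try ring

set_option maxHeartbeats 1600000 in
private lemma rGcase1 (y : ZMod 12 → ℂ) (hy : ∀ j, y j ≠ 0)
    (H1 : 1 + y 3 ≠ 0) (H2 : 1 + y 4 ≠ 0) :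
    alC 1 (rG 1 y) = (alC 1 y)⁻¹ ∧
      alC (1 - 1) (rG 1 y) = alC (1 - 1) y * alC 1 y ∧
      alC (1 + 1) (rG 1 y) = alC (1 + 1) y * alC 1 y ∧
      (∀ j : ZMod 6, j ≠ 1 - 1 → j ≠ 1 → j ≠ 1 + 1 → alC j (rG 1 y) = alC j y) ∧
      b0C (rG 1 y) = b0C y ∧
      b1C (rG 1 y) = b1C y ∧
      bp0C (rG 1 y) = bp0C y ∧
      bp1C (rG 1 y) = bp1C y ∧
      nqC (rG 1 y) = nqC y := by
  refine ⟨?_, ?_, ?_, ?_, ?_, ?_, ?_, ?_, ?_⟩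
  case refine_4 =>
    intro j hj1 hj2 hj3
    rcases hall6 j with rfl | rfl | rfl | rfl | rfl | rfl <;>
      first
        | exact absurd (by decide) hj1
        | exact absurd (by decide) hj2
        | exact absurd (by decide) hj3
        | (simp only [alC]; simp (config := { decide := true }) only [rG, if_true, if_false, Nat.reduceMul, Nat.reduceAdd, v0, vm0, vp0, v1, vm1, vp1, v2, vm2, vp2, v3, vm3, vp3, v4, vm4, vp4, v5, vm5, vp5, c0, c1, c2, c3, c4, c5, c6, c7, c8, c9, c10, c11, c12, c13, c14, c15, c12l, n1l, s0, a0_1, a0_2, a0_3, a0_4, s2, a2_1, a2_2, a2_3, a2_4, s4, a4_1, a4_2, a4_3, a4_4, s6, a6_1, a6_2, a6_3, a6_4, s8, a8_1, a8_2, a8_3, a8_4, s10, a10_1, a10_2, a10_3, a10_4])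
  all_goals
    simp only [alC, b0C, b1C, bp0C, bp1C, nqC]
    simp (config := { decide := true }) only [rG, if_true, if_false, Nat.reduceMul, Nat.reduceAdd, v0, vm0, vp0, v1, vm1, vp1, v2, vm2, vp2, v3, vm3, vp3, v4, vm4, vp4, v5, vm5, vp5, c0, c1, c2, c3, c4, c5, c6, c7, c8, c9, c10, c11, c12, c13, c14, c15, c12l, n1l, s0, a0_1, a0_2, a0_3, a0_4, s2, a2_1, a2_2, a2_3, a2_4, s4, a4_1, a4_2, a4_3, a4_4, s6, a6_1, a6_2, a6_3, a6_4, s8, a8_1, a8_2, a8_3, a8_4, s10, a10_1, a10_2, a10_3, a10_4]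
    try generalize hU : 1 + y 3 = U
    try rw [hU] at H1
    try generalize hV : 1 + y 4 = V
    try rw [hV] at H2
    try field_simp [hy 0, hy 1, hy 2, hy 3, hy 4, hy 5, hy 6, hy 7, hy 8, hy 9, hy 10, hy 11, H1, H2]
    try rw [div_eq_iff (by simp [hy 0, hy 1, hy 2, hy 3, hy 4, hy 5, hy 6, hy 7, hy 8, hy 9, hy 10, hy 11, H1, H2, pow_ne_zero])]
    try ring

set_option maxHeartbeats 1600000 in
private lemma rGcase2 (y : ZMod 12 → ℂ) (hy : ∀ j, y j ≠ 0)
    (H1 : 1 + y 5 ≠ 0) (H2 : 1 + y 6 ≠ 0) :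
    alC 2 (rG 2 y) = (alC 2 y)⁻¹ ∧
      alC (2 - 1) (rG 2 y) = alC (2 - 1) y * alC 2 y ∧
      alC (2 + 1) (rG 2 y) = alC (2 + 1) y * alC 2 y ∧
      (∀ j : ZMod 6, j ≠ 2 - 1 → j ≠ 2 → j ≠ 2 + 1 → alC j (rG 2 y) = alC j y) ∧
      b0C (rG 2 y) = b0C y ∧
      b1C (rG 2 y) = b1C y ∧
      bp0C (rG 2 y) = bp0C y ∧
      bp1C (rG 2 y) = bp1C y ∧
      nqC (rG 2 y) = nqC y := by
  refine ⟨?_, ?_, ?_, ?_, ?_, ?_, ?_, ?_, ?_⟩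
  case refine_4 =>
    intro j hj1 hj2 hj3
    rcases hall6 j with rfl | rfl | rfl | rfl | rfl | rfl <;>
      first
        | exact absurd (by decide) hj1
        | exact absurd (by decide) hj2
        | exact absurd (by decide) hj3
        | (simp only [alC]; simp (config := { decide := true }) only [rG, if_true, if_false, Nat.reduceMul, Nat.reduceAdd, v0, vm0, vp0, v1, vm1, vp1, v2, vm2, vp2, v3, vm3, vp3, v4, vm4, vp4, v5, vm5, vp5, c0, c1, c2, c3, c4, c5, c6, c7, c8, c9, c10, c11, c12, c13, c14, c15, c12l, n1l, s0, a0_1, a0_2, a0_3, a0_4, s2, a2_1, a2_2, a2_3, a2_4, s4, a4_1, a4_2, a4_3, a4_4, s6, a6_1, a6_2, a6_3, a6_4, s8, a8_1, a8_2, a8_3, a8_4, s10, a10_1, a10_2, a10_3, a10_4])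
  all_goals
    simp only [alC, b0C, b1C, bp0C, bp1C, nqC]
    simp (config := { decide := true }) only [rG, if_true, if_false, Nat.reduceMul, Nat.reduceAdd, v0, vm0, vp0, v1, vm1, vp1, v2, vm2, vp2, v3, vm3, vp3, v4, vm4, vp4, v5, vm5, vp5, c0, c1, c2, c3, c4, c5, c6, c7, c8, c9, c10, c11, c12, c13, c14, c15, c12l, n1l, s0, a0_1, a0_2, a0_3, a0_4, s2, a2_1, a2_2, a2_3, a2_4, s4, a4_1, a4_2, a4_3, a4_4, s6, a6_1, a6_2, a6_3, a6_4, s8, a8_1, a8_2, a8_3, a8_4, s10, a10_1, a10_2, a10_3, a10_4]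
    try generalize hU : 1 + y 5 = U
    try rw [hU] at H1
    try generalize hV : 1 + y 6 = V
    try rw [hV] at H2
    try field_simp [hy 0, hy 1, hy 2, hy 3, hy 4, hy 5, hy 6, hy 7, hy 8, hy 9, hy 10, hy 11, H1, H2]
    try rw [div_eq_iff (by simp [hy 0, hy 1, hy 2, hy 3, hy 4, hy 5, hy 6, hy 7, hy 8, hy 9, hy 10, hy 11, H1, H2, pow_ne_zero])]
    try ring

set_option maxHeartbeats 1600000 in
private lemma rGcase3 (y : ZMod 12 → ℂ) (hy : ∀ j, y j ≠ 0)
    (H1 : 1 + y 7 ≠ 0) (H2 : 1 + y 8 ≠ 0) :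
    alC 3 (rG 3 y) = (alC 3 y)⁻¹ ∧
      alC (3 - 1) (rG 3 y) = alC (3 - 1) y * alC 3 y ∧
      alC (3 + 1) (rG 3 y) = alC (3 + 1) y * alC 3 y ∧
      (∀ j : ZMod 6, j ≠ 3 - 1 → j ≠ 3 → j ≠ 3 + 1 → alC j (rG 3 y) = alC j y) ∧
      b0C (rG 3 y) = b0C y ∧
      b1C (rG 3 y) = b1C y ∧
      bp0C (rG 3 y) = bp0C y ∧
      bp1C (rG 3 y) = bp1C y ∧
      nqC (rG 3 y) = nqC y := by
  refine ⟨?_, ?_, ?_, ?_, ?_, ?_, ?_, ?_, ?_⟩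
  case refine_4 =>
    intro j hj1 hj2 hj3
    rcases hall6 j with rfl | rfl | rfl | rfl | rfl | rfl <;>
      first
        | exact absurd (by decide) hj1
        | exact absurd (by decide) hj2
        | exact absurd (by decide) hj3
        | (simp only [alC]; simp (config := { decide := true }) only [rG, if_true, if_false, Nat.reduceMul, Nat.reduceAdd, v0, vm0, vp0, v1, vm1, vp1, v2, vm2, vp2, v3, vm3, vp3, v4, vm4, vp4, v5, vm5, vp5, c0, c1, c2, c3, c4, c5, c6, c7, c8, c9, c10, c11, c12, c13, c14, c15, c12l, n1l, s0, a0_1, a0_2, a0_3, a0_4, s2, a2_1, a2_2, a2_3, a2_4, s4, a4_1, a4_2, a4_3, a4_4, s6, a6_1, a6_2, a6_3, a6_4, s8, a8_1, a8_2, a8_3, a8_4, s10, a10_1, a10_2, a10_3, a10_4])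
  all_goals
    simp only [alC, b0C, b1C, bp0C, bp1C, nqC]
    simp (config := { decide := true }) only [rG, if_true, if_false, Nat.reduceMul, Nat.reduceAdd, v0, vm0, vp0, v1, vm1, vp1, v2, vm2, vp2, v3, vm3, vp3, v4, vm4, vp4, v5, vm5, vp5, c0, c1, c2, c3, c4, c5, c6, c7, c8, c9, c10, c11, c12, c13, c14, c15, c12l, n1l, s0, a0_1, a0_2, a0_3, a0_4, s2, a2_1, a2_2, a2_3, a2_4, s4, a4_1, a4_2, a4_3, a4_4, s6, a6_1, a6_2, a6_3, a6_4, s8, a8_1, a8_2, a8_3, a8_4, s10, a10_1, a10_2, a10_3, a10_4]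
    try generalize hU : 1 + y 7 = U
    try rw [hU] at H1
    try generalize hV : 1 + y 8 = V
    try rw [hV] at H2
    try field_simp [hy 0, hy 1, hy 2, hy 3, hy 4, hy 5, hy 6, hy 7, hy 8, hy 9, hy 10, hy 11, H1, H2]
    try rw [div_eq_iff (by simp [hy 0, hy 1, hy 2, hy 3, hy 4, hy 5, hy 6, hy 7, hy 8, hy 9, hy 10, hy 11, H1, H2, pow_ne_zero])]
    try ring

set_option maxHeartbeats 1600000 in
private lemma rGcase4 (y : ZMod 12 → ℂ) (hy : ∀ j, y j ≠ 0)
    (H1 : 1 + y 9 ≠ 0) (H2 : 1 + y 10 ≠ 0) :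
    alC 4 (rG 4 y) = (alC 4 y)⁻¹ ∧
      alC (4 - 1) (rG 4 y) = alC (4 - 1) y * alC 4 y ∧
      alC (4 + 1) (rG 4 y) = alC (4 + 1) y * alC 4 y ∧
      (∀ j : ZMod 6, j ≠ 4 - 1 → j ≠ 4 → j ≠ 4 + 1 → alC j (rG 4 y) = alC j y) ∧
      b0C (rG 4 y) = b0C y ∧
      b1C (rG 4 y) = b1C y ∧
      bp0C (rG 4 y) = bp0C y ∧
      bp1C (rG 4 y) = bp1C y ∧
      nqC (rG 4 y) = nqC y := by
  refine ⟨?_, ?_, ?_, ?_, ?_, ?_, ?_, ?_, ?_⟩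
  case refine_4 =>
    intro j hj1 hj2 hj3
    rcases hall6 j with rfl | rfl | rfl | rfl | rfl | rfl <;>
      first
        | exact absurd (by decide) hj1
        | exact absurd (by decide) hj2
        | exact absurd (by decide) hj3
        | (simp only [alC]; simp (config := { decide := true }) only [rG, if_true, if_false, Nat.reduceMul, Nat.reduceAdd, v0, vm0, vp0, v1, vm1, vp1, v2, vm2, vp2, v3, vm3, vp3, v4, vm4, vp4, v5, vm5, vp5, c0, c1, c2, c3, c4, c5, c6, c7, c8, c9, c10, c11, c12, c13, c14, c15, c12l, n1l, s0, a0_1, a0_2, a0_3, a0_4, s2, a2_1, a2_2, a2_3, a2_4, s4, a4_1, a4_2, a4_3, a4_4, s6, a6_1, a6_2, a6_3, a6_4, s8, a8_1, a8_2, a8_3, a8_4, s10, a10_1, a10_2, a10_3, a10_4])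
  all_goals
    simp only [alC, b0C, b1C, bp0C, bp1C, nqC]
    simp (config := { decide := true }) only [rG, if_true, if_false, Nat.reduceMul, Nat.reduceAdd, v0, vm0, vp0, v1, vm1, vp1, v2, vm2, vp2, v3, vm3, vp3, v4, vm4, vp4, v5, vm5, vp5, c0, c1, c2, c3, c4, c5, c6, c7, c8, c9, c10, c11, c12, c13, c14, c15, c12l, n1l, s0, a0_1, a0_2, a0_3, a0_4, s2, a2_1, a2_2, a2_3, a2_4, s4, a4_1, a4_2, a4_3, a4_4, s6, a6_1, a6_2, a6_3, a6_4, s8, a8_1, a8_2, a8_3, a8_4, s10, a10_1, a10_2, a10_3, a10_4]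
    try generalize hU : 1 + y 9 = U
    try rw [hU] at H1
    try generalize hV : 1 + y 10 = V
    try rw [hV] at H2
    try field_simp [hy 0, hy 1, hy 2, hy 3, hy 4, hy 5, hy 6, hy 7, hy 8, hy 9, hy 10, hy 11, H1, H2]
    try rw [div_eq_iff (by simp [hy 0, hy 1, hy 2, hy 3, hy 4, hy 5, hy 6, hy 7, hy 8, hy 9, hy 10, hy 11, H1, H2, pow_ne_zero])]
    try ring

set_option maxHeartbeats 1600000 in
private lemma rGcase5 (y : ZMod 12 → ℂ) (hy : ∀ j, y j ≠ 0)
    (H1 : 1 + y 11 ≠ 0) (H2 : 1 + y 0 ≠ 0) :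
    alC 5 (rG 5 y) = (alC 5 y)⁻¹ ∧
      alC (5 - 1) (rG 5 y) = alC (5 - 1) y * alC 5 y ∧
      alC (5 + 1) (rG 5 y) = alC (5 + 1) y * alC 5 y ∧
      (∀ j : ZMod 6, j ≠ 5 - 1 → j ≠ 5 → j ≠ 5 + 1 → alC j (rG 5 y) = alC j y) ∧
      b0C (rG 5 y) = b0C y ∧
      b1C (rG 5 y) = b1C y ∧
      bp0C (rG 5 y) = bp0C y ∧
      bp1C (rG 5 y) = bp1C y ∧
      nqC (rG 5 y) = nqC y := by
  refine ⟨?_, ?_, ?_, ?_, ?_, ?_, ?_, ?_, ?_⟩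
  case refine_4 =>
    intro j hj1 hj2 hj3
    rcases hall6 j with rfl | rfl | rfl | rfl | rfl | rfl <;>
      first
        | exact absurd (by decide) hj1
        | exact absurd (by decide) hj2
        | exact absurd (by decide) hj3
        | (simp only [alC]; simp (config := { decide := true }) only [rG, if_true, if_false, Nat.reduceMul, Nat.reduceAdd, v0, vm0, vp0, v1, vm1, vp1, v2, vm2, vp2, v3, vm3, vp3, v4, vm4, vp4, v5, vm5, vp5, c0, c1, c2, c3, c4, c5, c6, c7, c8, c9, c10, c11, c12, c13, c14, c15, c12l, n1l, s0, a0_1, a0_2, a0_3, a0_4, s2, a2_1, a2_2, a2_3, a2_4, s4, a4_1, a4_2, a4_3, a4_4, s6, a6_1, a6_2, a6_3, a6_4, s8, a8_1, a8_2, a8_3, a8_4, s10, a10_1, a10_2, a10_3, a10_4])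
  all_goals
    simp only [alC, b0C, b1C, bp0C, bp1C, nqC]
    simp (config := { decide := true }) only [rG, if_true, if_false, Nat.reduceMul, Nat.reduceAdd, v0, vm0, vp0, v1, vm1, vp1, v2, vm2, vp2, v3, vm3, vp3, v4, vm4, vp4, v5, vm5, vp5, c0, c1, c2, c3, c4, c5, c6, c7, c8, c9, c10, c11, c12, c13, c14, c15, c12l, n1l, s0, a0_1, a0_2, a0_3, a0_4, s2, a2_1, a2_2, a2_3, a2_4, s4, a4_1, a4_2, a4_3, a4_4, s6, a6_1, a6_2, a6_3, a6_4, s8, a8_1, a8_2, a8_3, a8_4, s10, a10_1, a10_2, a10_3, a10_4]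
    try generalize hU : 1 + y 11 = U
    try rw [hU] at H1
    try generalize hV : 1 + y 0 = V
    try rw [hV] at H2
    try field_simp [hy 0, hy 1, hy 2, hy 3, hy 4, hy 5, hy 6, hy 7, hy 8, hy 9, hy 10, hy 11, H1, H2]
    try rw [div_eq_iff (by simp [hy 0, hy 1, hy 2, hy 3, hy 4, hy 5, hy 6, hy 7, hy 8, hy 9, hy 10, hy 11, H1, H2, pow_ne_zero])]
    try ring


/-- The action of `r_i` on the simple roots: `r_i(α_j) = α_j α_i^{-a_{i,j}}`
where `(a_{i,j})` is the generalized Cartan matrix of type `A_5^{(1)}`, and `r_i` fixes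
`β_0, β_1, β'_0, β'_1` and the null root `q`. -/
theorem rG_on_roots (i : ZMod 6) (y : ZMod 12 → ℂ)
    (hy : ∀ j, y j ≠ 0)
    (h1 : y (((2 * i.val + 1 : ℕ) : ZMod 12)) ≠ -1)
    (h2 : y (((2 * i.val + 2 : ℕ) : ZMod 12)) ≠ -1) :
    alC i (rG i y) = (alC i y)⁻¹ ∧
      alC (i - 1) (rG i y) = alC (i - 1) y * alC i y ∧
      alC (i + 1) (rG i y) = alC (i + 1) y * alC i y ∧
      (∀ j : ZMod 6, j ≠ i - 1 → j ≠ i → j ≠ i + 1 → alC j (rG i y) = alC j y) ∧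
      b0C (rG i y) = b0C y ∧
      b1C (rG i y) = b1C y ∧
      bp0C (rG i y) = bp0C y ∧
      bp1C (rG i y) = bp1C y ∧
      nqC (rG i y) = nqC y := by
  have H1 : 1 + y (((2 * i.val + 1 : ℕ) : ZMod 12)) ≠ 0 := fun h => h1 (by linear_combination h)
  have H2 : 1 + y (((2 * i.val + 2 : ℕ) : ZMod 12)) ≠ 0 := fun h => h2 (by linear_combination h)
  clear h1 h2
  rcases hall6 i with rfl | rfl | rfl | rfl | rfl | rfl <;>
    simp only [Nat.reduceMul, Nat.reduceAdd, v0, vm0, vp0, v1, vm1, vp1, v2, vm2, vp2, v3, vm3, vp3, v4, vm4, vp4, v5, vm5, vp5, c0, c1, c2, c3, c4, c5, c6, c7, c8, c9, c10, c11, c12, c13, c14, c15, c12l, n1l, s0, a0_1, a0_2, a0_3, a0_4, s2, a2_1, a2_2, a2_3, a2_4, s4, a4_1, a4_2, a4_3, a4_4, s6, a6_1, a6_2, a6_3, a6_4, s8, a8_1, a8_2, a8_3, a8_4, s10, a10_1, a10_2, a10_3, a10_4] at H1 H2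
  exacts [rGcase0 y hy H1 H2, rGcase1 y hy H1 H2, rGcase2 y hy H1 H2,
    rGcase3 y hy H1 H2, rGcase4 y hy H1 H2, rGcase5 y hy H1 H2]
end
end

section
/- Let q, α_0, …, α_5 be complex numbers with 0 < |q| < 1, and assume α_0α_5·q^m ≠ 1 and α_0α_1α_2α_5·q^m ≠ 1 for all integers m ≥ 0. Define, for |t| < 1: x_0(t) = ₃φ₂[α_5, α_0α_1α_5, α_0α_1α_2α_3α_5; α_0α_5, α_0α_1α_2α_5; q, qt], x_1(t) = ((1−α_5)/(1−α_0α_5))·₃φ₂[qα_5, α_0α_1α_5, α_0α_1α_2α_3α_5; qα_0α_5, α_0α_1α_2α_5; q, qt], x_2(t) = ((1−α_5)(1−α_0α_1α_5)/((1−α_0α_5)(1−α_0α_1α_2α_5)))·₃φ₂[qα_5, qα_0α_1α_5, α_0α_1α_2α_3α_5; qα_0α_5, qα_0α_1α_2α_5; q, qt]. Then for every t with |t| < 1 the vector x(t) = (x_0(t), x_1(t), x_2(t))ᵀ satisfies x(q^{-1}t) = (A_0/(1−t) + tA_1/(1−t))·x(t). -/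
noncomputable section

/-- The `q`-Pochhammer symbol `(a;q)_n = Π_{k=1}^{n} (1 - a q^{k-1})`. -/
def qPoch (q a : ℂ) (n : ℕ) : ℂ := ∏ k ∈ Finset.range n, (1 - a * q ^ k)

/-- The basic hypergeometric series `₃φ₂[a₁,a₂,a₃; b₁,b₂; q, t]`. -/
def phi32 (a1 a2 a3 b1 b2 q t : ℂ) : ℂ :=
  ∑' n : ℕ, (qPoch q a1 n * qPoch q a2 n * qPoch q a3 n) /
    (qPoch q b1 n * qPoch q b2 n * qPoch q q n) * t ^ n

/-- `x₀(t)` of the hypergeometric solution of the `q`-Garnier linear system. -/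
def X0 (q a0 a1 a2 a3 a5 t : ℂ) : ℂ :=
  phi32 a5 (a0 * a1 * a5) (a0 * a1 * a2 * a3 * a5) (a0 * a5) (a0 * a1 * a2 * a5) q (q * t)

/-- `x₁(t)` of the hypergeometric solution of the `q`-Garnier linear system. -/
def X1 (q a0 a1 a2 a3 a5 t : ℂ) : ℂ :=
  (1 - a5) / (1 - a0 * a5) *
    phi32 (q * a5) (a0 * a1 * a5) (a0 * a1 * a2 * a3 * a5) (q * a0 * a5) (a0 * a1 * a2 * a5)
      q (q * t)

/-- `x₂(t)` of the hypergeometric solution of the `q`-Garnier linear system. -/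
def X2 (q a0 a1 a2 a3 a5 t : ℂ) : ℂ :=
  (1 - a5) * (1 - a0 * a1 * a5) / ((1 - a0 * a5) * (1 - a0 * a1 * a2 * a5)) *
    phi32 (q * a5) (q * a0 * a1 * a5) (a0 * a1 * a2 * a3 * a5) (q * a0 * a5)
      (q * a0 * a1 * a2 * a5) q (q * t)


/-!
The coefficient vector `cₙ` of `x(t) = ∑ cₙ (qt)ⁿ` is the coefficient of `x₀` times a rational
vector in `u = qⁿ`, by the contiguity relations `(1 - a) (qa; q)ₙ = (a; q)ₙ (1 - aqⁿ)` of the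
`q`-Pochhammer symbol. Since `x(q⁻¹t) = ∑ cₙ tⁿ`, multiplying the system by `1 - t` and
comparing coefficients of `tⁿ⁺¹` turns it into the recurrence
`cₙ₊₁ = cₙ + qⁿ⁺¹ A₀ cₙ₊₁ + qⁿ A₁ cₙ` (with `c₀ = A₀ c₀`), which is an identity between
rational functions of `u`. Convergence for `|t| < 1` follows from the ratio test, the ratio of
consecutive coefficients tending to `1`.
-/

open Filter Topology Matrix

lemma qPoch_succ (q a : ℂ) (n : ℕ) : qPoch q a (n + 1) = qPoch q a n * (1 - a * q ^ n) :=
  Finset.prod_range_succ _ n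

lemma one_sub_mul_qPoch_q_mul (q a : ℂ) (n : ℕ) :
    (1 - a) * qPoch q (q * a) n = qPoch q a n * (1 - a * q ^ n) := by
  rw [← qPoch_succ, qPoch, qPoch, Finset.prod_range_succ', pow_zero, mul_one, mul_comm]
  congr 1
  exact Finset.prod_congr rfl fun k _ => by ring

section phi32Coeff

variable (a1 a2 a3 b1 b2 q : ℂ)

def phi32Coeff (n : ℕ) : ℂ :=
  qPoch q a1 n * qPoch q a2 n * qPoch q a3 n / (qPoch q b1 n * qPoch q b2 n * qPoch q q n)

lemma phi32_eq_tsum (t : ℂ) :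
    phi32 a1 a2 a3 b1 b2 q t = ∑' n, phi32Coeff a1 a2 a3 b1 b2 q n * t ^ n :=
  rfl

lemma phi32Coeff_zero : phi32Coeff a1 a2 a3 b1 b2 q 0 = 1 := by
  simp [phi32Coeff, qPoch]

lemma phi32Coeff_succ (n : ℕ) :
    phi32Coeff a1 a2 a3 b1 b2 q (n + 1) = phi32Coeff a1 a2 a3 b1 b2 q n *
      ((1 - a1 * q ^ n) * (1 - a2 * q ^ n) * (1 - a3 * q ^ n) /
        ((1 - b1 * q ^ n) * (1 - b2 * q ^ n) * (1 - q * q ^ n))) := by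
  rw [phi32Coeff, phi32Coeff, div_mul_div_comm]
  simp only [qPoch_succ]
  congr 1 <;> ring

lemma phi32Coeff_comm : phi32Coeff a1 a2 a3 b1 b2 q = phi32Coeff a2 a1 a3 b2 b1 q := by
  funext n
  simp only [phi32Coeff, mul_comm (qPoch q a1 n), mul_comm (qPoch q b1 n)]

lemma phi32Coeff_contiguous (n : ℕ) :
    (1 - a1) / (1 - b1) * phi32Coeff (q * a1) a2 a3 (q * b1) b2 q n =
      phi32Coeff a1 a2 a3 b1 b2 q n * ((1 - a1 * q ^ n) / (1 - b1 * q ^ n)) := by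
  rw [phi32Coeff, phi32Coeff, div_mul_div_comm, div_mul_div_comm]
  congr 1
  · linear_combination (qPoch q a2 n * qPoch q a3 n) * one_sub_mul_qPoch_q_mul q a1 n
  · linear_combination (qPoch q b2 n * qPoch q q n) * one_sub_mul_qPoch_q_mul q b1 n

lemma phi32Coeff_contiguous_middle (n : ℕ) :
    (1 - a2) / (1 - b2) * phi32Coeff a1 (q * a2) a3 b1 (q * b2) q n =
      phi32Coeff a1 a2 a3 b1 b2 q n * ((1 - a2 * q ^ n) / (1 - b2 * q ^ n)) := by
  rw [phi32Coeff_comm, phi32Coeff_contiguous, phi32Coeff_comm]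

end phi32Coeff

lemma summable_mul_pow_of_ratio_tendsto_one {𝕜 : Type*} [NormedField 𝕜] [CompleteSpace 𝕜]
    {f ρ : ℕ → 𝕜} (hf : ∀ n, f (n + 1) = f n * ρ n) (hρ : Tendsto ρ atTop (𝓝 1)) {t : 𝕜}
    (ht : ‖t‖ < 1) : Summable fun n => f n * t ^ n := by
  obtain ⟨r, htr, hr⟩ := exists_between ht
  refine summable_of_ratio_norm_eventually_le hr ?_
  have hlim : Tendsto (fun n => ‖ρ n‖ * ‖t‖) atTop (𝓝 ‖t‖) := by
    simpa using hρ.norm.mul_const ‖t‖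
  filter_upwards [hlim.eventually (eventually_le_nhds htr)] with n hn
  calc ‖f (n + 1) * t ^ (n + 1)‖ = ‖ρ n‖ * ‖t‖ * ‖f n * t ^ n‖ := by
        rw [hf, pow_succ]; simp only [norm_mul, norm_pow]; ring
    _ ≤ r * ‖f n * t ^ n‖ := by gcongr

lemma summable_phi32Coeff_mul_pow (a1 a2 a3 b1 b2 : ℂ) {q t : ℂ} (hq : ‖q‖ < 1) (ht : ‖t‖ < 1) :
    Summable fun n => phi32Coeff a1 a2 a3 b1 b2 q n * t ^ n := by
  refine summable_mul_pow_of_ratio_tendsto_one (phi32Coeff_succ a1 a2 a3 b1 b2 q) ?_ ht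
  have hfac (c : ℂ) : Tendsto (fun n => 1 - c * q ^ n) atTop (𝓝 1) := by
    simpa using ((tendsto_pow_atTop_nhds_zero_of_norm_lt_one hq).const_mul c).const_sub 1
  have h := (((hfac a1).mul (hfac a2)).mul (hfac a3)).div
    (((hfac b1).mul (hfac b2)).mul (hfac q)) (by norm_num)
  rwa [show (1 : ℂ) * 1 * 1 / (1 * 1 * 1) = 1 by norm_num] at h

theorem one_sub_smul_eq_of_coeff_recurrence {E : Type*} [AddCommGroup E] [Module ℂ E]
    [TopologicalSpace E] [IsTopologicalAddGroup E] [ContinuousConstSMul ℂ E] [T2Space E]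
    {q t : ℂ} {c P R : ℕ → E} {S SP SR : E}
    (hS : HasSum (fun n => t ^ n • c n) S) (hP : HasSum (fun n => (q * t) ^ n • P n) SP)
    (hR : HasSum (fun n => (q * t) ^ n • R n) SR) (h0 : c 0 = P 0)
    (hrec : ∀ n, c (n + 1) = c n + q ^ (n + 1) • P (n + 1) + q ^ n • R n) :
    (1 - t) • S = SP + t • SR := by
  have hS1 : HasSum (fun n => t ^ (n + 1) • c (n + 1)) (S - c 0) := by
    simpa using (hasSum_nat_add_iff' 1).mpr hS
  have hP1 : HasSum (fun n => (q * t) ^ (n + 1) • P (n + 1)) (SP - P 0) := by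
    simpa using (hasSum_nat_add_iff' 1).mpr hP
  have hS1' : HasSum (fun n => t ^ (n + 1) • c (n + 1)) (t • S + (SP - P 0) + t • SR) := by
    convert ((hS.const_smul t).add hP1).add (hR.const_smul t) using 1
    funext n
    rw [hrec n]
    module
  have hS0 := hS1.unique hS1'
  rw [h0, sub_eq_iff_eq_add] at hS0
  rw [sub_smul, one_smul, sub_eq_iff_eq_add]
  conv_lhs => rw [hS0]
  abel

def garnierA0 (a0 a1 a2 a5 : ℂ) : Matrix (Fin 3) (Fin 3) ℂ :=
  !![1, 0, 0; 1 - a5, a0 * a5, 0; 1 - a5, a0 * a5 * (1 - a1), a0 * a1 * a2 * a5]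

def garnierA1 (a0 a1 a2 a3 a5 : ℂ) : Matrix (Fin 3) (Fin 3) ℂ :=
  !![-a5, a0 * a5 * (1 - a1), a0 * a1 * a2 * a5 * (1 - a3);
    0, -(a0 * a1 * a5), a0 * a1 * a2 * a5 * (1 - a3);
    0, 0, -(a0 * a1 * a2 * a3 * a5)]

def garnierX (q a0 a1 a2 a3 a5 t : ℂ) : Fin 3 → ℂ :=
  ![X0 q a0 a1 a2 a3 a5 t, X1 q a0 a1 a2 a3 a5 t, X2 q a0 a1 a2 a3 a5 t]

def garnierWeight (a0 a1 a2 a5 u : ℂ) : Fin 3 → ℂ :=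
  ![1, (1 - a5 * u) / (1 - a0 * a5 * u),
    (1 - a5 * u) * (1 - a0 * a1 * a5 * u) / ((1 - a0 * a5 * u) * (1 - a0 * a1 * a2 * a5 * u))]

def garnierCoeff (q a0 a1 a2 a3 a5 : ℂ) (n : ℕ) : Fin 3 → ℂ :=
  phi32Coeff a5 (a0 * a1 * a5) (a0 * a1 * a2 * a3 * a5) (a0 * a5) (a0 * a1 * a2 * a5) q n •
    garnierWeight a0 a1 a2 a5 (q ^ n)

section garnier

variable {q a0 a1 a2 a3 a5 : ℂ}

lemma garnierA0_mulVec (v : Fin 3 → ℂ) :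
    garnierA0 a0 a1 a2 a5 *ᵥ v = ![v 0, (1 - a5) * v 0 + a0 * a5 * v 1,
      (1 - a5) * v 0 + a0 * a5 * (1 - a1) * v 1 + a0 * a1 * a2 * a5 * v 2] := by
  funext i
  fin_cases i <;> simp [garnierA0, mulVec, dotProduct, Fin.sum_univ_three]

lemma garnierA1_mulVec (v : Fin 3 → ℂ) :
    garnierA1 a0 a1 a2 a3 a5 *ᵥ v =
      ![-a5 * v 0 + a0 * a5 * (1 - a1) * v 1 + a0 * a1 * a2 * a5 * (1 - a3) * v 2,
        -(a0 * a1 * a5) * v 1 + a0 * a1 * a2 * a5 * (1 - a3) * v 2,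
        -(a0 * a1 * a2 * a3 * a5) * v 2] := by
  funext i
  fin_cases i <;> simp [garnierA1, mulVec, dotProduct, Fin.sum_univ_three]

lemma garnierCoeff_one (n : ℕ) :
    garnierCoeff q a0 a1 a2 a3 a5 n 1 = (1 - a5) / (1 - a0 * a5) *
      phi32Coeff (q * a5) (a0 * a1 * a5) (a0 * a1 * a2 * a3 * a5) (q * a0 * a5)
        (a0 * a1 * a2 * a5) q n := by
  rw [mul_assoc q a0, phi32Coeff_contiguous]
  simp [garnierCoeff, garnierWeight]

lemma garnierCoeff_two (n : ℕ) :
    garnierCoeff q a0 a1 a2 a3 a5 n 2 =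
      (1 - a5) * (1 - a0 * a1 * a5) / ((1 - a0 * a5) * (1 - a0 * a1 * a2 * a5)) *
        phi32Coeff (q * a5) (q * a0 * a1 * a5) (a0 * a1 * a2 * a3 * a5) (q * a0 * a5)
          (q * a0 * a1 * a2 * a5) q n := by
  rw [show q * a0 * a1 * a5 = q * (a0 * a1 * a5) by ring,
    show q * a0 * a1 * a2 * a5 = q * (a0 * a1 * a2 * a5) by ring, mul_div_mul_comm, mul_assoc,
    phi32Coeff_contiguous_middle, ← mul_assoc, mul_assoc q a0, phi32Coeff_contiguous]
  simp [garnierCoeff, garnierWeight, mul_assoc, div_mul_div_comm]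

lemma garnierCoeff_zero (hb : a0 * a5 ≠ 1) (hc : a0 * a1 * a2 * a5 ≠ 1) :
    garnierCoeff q a0 a1 a2 a3 a5 0 = garnierA0 a0 a1 a2 a5 *ᵥ garnierCoeff q a0 a1 a2 a3 a5 0 := by
  have hb0 : 1 - a0 * a5 ≠ 0 := sub_ne_zero.2 hb.symm
  have hc0 : 1 - a0 * a1 * a2 * a5 ≠ 0 := sub_ne_zero.2 hc.symm
  rw [garnierA0_mulVec]
  simp only [garnierCoeff, garnierWeight, phi32Coeff_zero, pow_zero, mul_one, one_smul]
  generalize eb0 : 1 - a0 * a5 = b0 at *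
  generalize ec0 : 1 - a0 * a1 * a2 * a5 = c0 at *
  funext i
  fin_cases i <;>
    simp only [Fin.zero_eta, Fin.mk_one, Fin.reduceFinMk, cons_val_zero, cons_val_one, cons_val,
      mul_one] <;>
    field_simp <;> subst eb0 ec0 <;> ring

lemma garnierCoeff_succ (hq : ‖q‖ < 1)
    (hres : ∀ m : ℕ, a0 * a5 * q ^ m ≠ 1 ∧ a0 * a1 * a2 * a5 * q ^ m ≠ 1) (n : ℕ) :
    garnierCoeff q a0 a1 a2 a3 a5 (n + 1) = garnierCoeff q a0 a1 a2 a3 a5 n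
      + q ^ (n + 1) • garnierA0 a0 a1 a2 a5 *ᵥ garnierCoeff q a0 a1 a2 a3 a5 (n + 1)
      + q ^ n • garnierA1 a0 a1 a2 a3 a5 *ᵥ garnierCoeff q a0 a1 a2 a3 a5 n := by
  have hd : 1 - q * q ^ n ≠ 0 := by
    rw [sub_ne_zero, ← pow_succ']
    intro h
    have := congrArg norm h
    rw [norm_one, norm_pow] at this
    exact (pow_lt_one₀ (norm_nonneg q) hq n.succ_ne_zero).ne' this
  have hb0 : 1 - a0 * a5 * q ^ n ≠ 0 := sub_ne_zero.2 (hres n).1.symm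
  have hc0 : 1 - a0 * a1 * a2 * a5 * q ^ n ≠ 0 := sub_ne_zero.2 (hres n).2.symm
  have hb1 : 1 - a0 * a5 * (q * q ^ n) ≠ 0 := by
    rw [← pow_succ']; exact sub_ne_zero.2 (hres (n + 1)).1.symm
  have hc1 : 1 - a0 * a1 * a2 * a5 * (q * q ^ n) ≠ 0 := by
    rw [← pow_succ']; exact sub_ne_zero.2 (hres (n + 1)).2.symm
  rw [garnierA0_mulVec, garnierA1_mulVec]
  simp only [garnierCoeff, garnierWeight, phi32Coeff_succ, pow_succ']
  generalize phi32Coeff a5 (a0 * a1 * a5) (a0 * a1 * a2 * a3 * a5) (a0 * a5) (a0 * a1 * a2 * a5)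
    q n = F
  generalize q ^ n = u at *
  -- the denominators become atoms, so that `field_simp` recognises them as nonzero
  generalize eb0 : 1 - a0 * a5 * u = b0 at *
  generalize ec0 : 1 - a0 * a1 * a2 * a5 * u = c0 at *
  generalize eb1 : 1 - a0 * a5 * (q * u) = b1 at *
  generalize ec1 : 1 - a0 * a1 * a2 * a5 * (q * u) = c1 at *
  generalize ed : 1 - q * u = d at *
  funext i
  fin_cases i <;>
    simp only [Fin.zero_eta, Fin.mk_one, Fin.reduceFinMk, Pi.add_apply, Pi.smul_apply, smul_eq_mul,
      cons_val_zero, cons_val_one, cons_val, mul_one] <;>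
    field_simp <;> subst eb0 ec0 eb1 ec1 ed <;> ring

end garnier

lemma hasSum_garnierCoeff (a0 a1 a2 a3 a5 : ℂ) {q t : ℂ} (hq : ‖q‖ < 1) (ht : ‖q * t‖ < 1) :
    HasSum (fun n => (q * t) ^ n • garnierCoeff q a0 a1 a2 a3 a5 n)
      (garnierX q a0 a1 a2 a3 a5 t) := by
  have hsum (k a1 a2 a3 b1 b2 : ℂ) :
      HasSum (fun n => (q * t) ^ n * (k * phi32Coeff a1 a2 a3 b1 b2 q n))
        (k * phi32 a1 a2 a3 b1 b2 q (q * t)) := by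
    simpa only [phi32_eq_tsum, mul_comm, mul_left_comm, mul_assoc] using
      (summable_phi32Coeff_mul_pow a1 a2 a3 b1 b2 hq ht).hasSum.mul_left k
  refine Pi.hasSum.mpr fun i => ?_
  fin_cases i
  · simpa [garnierCoeff, garnierWeight, garnierX, X0] using hsum 1 _ _ _ _ _
  · simpa [garnierCoeff_one, garnierX, X1] using hsum ((1 - a5) / (1 - a0 * a5)) _ _ _ _ _
  · simpa [garnierCoeff_two, garnierX, X2] using
      hsum ((1 - a5) * (1 - a0 * a1 * a5) / ((1 - a0 * a5) * (1 - a0 * a1 * a2 * a5))) _ _ _ _ _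

theorem garnierX_qDifference (a0 a1 a2 a3 a5 : ℂ) {q : ℂ} (hq0 : q ≠ 0) (hq : ‖q‖ < 1)
    (hres : ∀ m : ℕ, a0 * a5 * q ^ m ≠ 1 ∧ a0 * a1 * a2 * a5 * q ^ m ≠ 1) {t : ℂ} (ht : ‖t‖ < 1) :
    (1 - t) • garnierX q a0 a1 a2 a3 a5 (q⁻¹ * t) =
      garnierA0 a0 a1 a2 a5 *ᵥ garnierX q a0 a1 a2 a3 a5 t +
        t • garnierA1 a0 a1 a2 a3 a5 *ᵥ garnierX q a0 a1 a2 a3 a5 t := by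
  have hqt : ‖q * t‖ < 1 := by
    rw [norm_mul]; exact mul_lt_one_of_nonneg_of_lt_one_left (norm_nonneg q) hq ht.le
  have hX := hasSum_garnierCoeff a0 a1 a2 a3 a5 hq hqt
  have hmulVec (A : Matrix (Fin 3) (Fin 3) ℂ) :
      HasSum (fun n => (q * t) ^ n • A *ᵥ garnierCoeff q a0 a1 a2 a3 a5 n)
        (A *ᵥ garnierX q a0 a1 a2 a3 a5 t) := by
    simpa [Function.comp_def, mulVec_smul] using
      hX.map (mulVecLin A) (mulVecLin A).continuous_of_finiteDimensional
  refine one_sub_smul_eq_of_coeff_recurrence ?_ (hmulVec _) (hmulVec _)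
    (garnierCoeff_zero (by simpa using (hres 0).1) (by simpa using (hres 0).2))
    (garnierCoeff_succ hq hres)
  simpa [mul_inv_cancel_left₀ hq0] using
    hasSum_garnierCoeff a0 a1 a2 a3 a5 hq (t := q⁻¹ * t) (by rwa [mul_inv_cancel_left₀ hq0])

theorem phi32_solves_linear_system_general (q a0 a1 a2 a3 a5 : ℂ)
    (hq0 : 0 < ‖q‖) (hq1 : ‖q‖ < 1)
    (hres : ∀ m : ℕ, a0 * a5 * q ^ m ≠ 1 ∧ a0 * a1 * a2 * a5 * q ^ m ≠ 1) :
    ∀ t : ℂ, ‖t‖ < 1 →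
      (X0 q a0 a1 a2 a3 a5 (q⁻¹ * t) =
        X0 q a0 a1 a2 a3 a5 t / (1 - t)
          + t * (-a5 * X0 q a0 a1 a2 a3 a5 t + a0 * a5 * (1 - a1) * X1 q a0 a1 a2 a3 a5 t
              + a0 * a1 * a2 * a5 * (1 - a3) * X2 q a0 a1 a2 a3 a5 t) / (1 - t)) ∧
      (X1 q a0 a1 a2 a3 a5 (q⁻¹ * t) =
        ((1 - a5) * X0 q a0 a1 a2 a3 a5 t + a0 * a5 * X1 q a0 a1 a2 a3 a5 t) / (1 - t)
          + t * (-(a0 * a1 * a5) * X1 q a0 a1 a2 a3 a5 t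
              + a0 * a1 * a2 * a5 * (1 - a3) * X2 q a0 a1 a2 a3 a5 t) / (1 - t)) ∧
      (X2 q a0 a1 a2 a3 a5 (q⁻¹ * t) =
        ((1 - a5) * X0 q a0 a1 a2 a3 a5 t + a0 * a5 * (1 - a1) * X1 q a0 a1 a2 a3 a5 t
            + a0 * a1 * a2 * a5 * X2 q a0 a1 a2 a3 a5 t) / (1 - t)
          + t * (-(a0 * a1 * a2 * a3 * a5) * X2 q a0 a1 a2 a3 a5 t) / (1 - t)) := by
  intro t ht
  have ht1 : 1 - t ≠ 0 := by
    rw [sub_ne_zero]; rintro rfl; simp at ht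
  have hsys := garnierX_qDifference a0 a1 a2 a3 a5 (norm_pos_iff.mp hq0) hq1 hres ht
  rw [garnierA0_mulVec, garnierA1_mulVec] at hsys
  have row0 := congrFun hsys 0
  have row1 := congrFun hsys 1
  have row2 := congrFun hsys 2
  simp only [garnierX, Pi.add_apply, Pi.smul_apply, smul_eq_mul, cons_val_zero, cons_val_one,
    cons_val] at row0 row1 row2
  simp only [← add_div, eq_div_iff ht1]
  exact ⟨by linear_combination row0, by linear_combination row1, by linear_combination row2⟩

/-- The vector `x(t) = (x₀(t), x₁(t), x₂(t))ᵀ` built from `₃φ₂` series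
satisfies the linear `q`-difference system `x(q⁻¹t) = (A₀/(1-t) + tA₁/(1-t)) x(t)` of the
`q`-Garnier system of fourth order, for `|t| < 1`. -/
theorem phi32_solves_linear_system (q a0 a1 a2 a3 a4 a5 : ℂ)
    (hq0 : 0 < ‖q‖) (hq1 : ‖q‖ < 1)
    (hres : ∀ m : ℕ, a0 * a5 * q ^ m ≠ 1 ∧ a0 * a1 * a2 * a5 * q ^ m ≠ 1) :
    ∀ t : ℂ, ‖t‖ < 1 →
      (X0 q a0 a1 a2 a3 a5 (q⁻¹ * t) =
        X0 q a0 a1 a2 a3 a5 t / (1 - t)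
          + t * (-a5 * X0 q a0 a1 a2 a3 a5 t + a0 * a5 * (1 - a1) * X1 q a0 a1 a2 a3 a5 t
              + a0 * a1 * a2 * a5 * (1 - a3) * X2 q a0 a1 a2 a3 a5 t) / (1 - t)) ∧
      (X1 q a0 a1 a2 a3 a5 (q⁻¹ * t) =
        ((1 - a5) * X0 q a0 a1 a2 a3 a5 t + a0 * a5 * X1 q a0 a1 a2 a3 a5 t) / (1 - t)
          + t * (-(a0 * a1 * a5) * X1 q a0 a1 a2 a3 a5 t
              + a0 * a1 * a2 * a5 * (1 - a3) * X2 q a0 a1 a2 a3 a5 t) / (1 - t)) ∧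
      (X2 q a0 a1 a2 a3 a5 (q⁻¹ * t) =
        ((1 - a5) * X0 q a0 a1 a2 a3 a5 t + a0 * a5 * (1 - a1) * X1 q a0 a1 a2 a3 a5 t
            + a0 * a1 * a2 * a5 * X2 q a0 a1 a2 a3 a5 t) / (1 - t)
          + t * (-(a0 * a1 * a2 * a3 * a5) * X2 q a0 a1 a2 a3 a5 t) / (1 - t)) :=
  phi32_solves_linear_system_general q a0 a1 a2 a3 a5 hq0 hq1 hres
end
end

section
/- Let w = r_0 ∘ r_5 ∘ r_0. For every 12-tuple y of nonzero complex numbers outside the hypersurfaces where some denominator in the composition vanishes, writing Y_{i,j,k} = 1 + y_i + y_iy_j + y_iy_jy_k, the following hold: (w(y))_1·(w(y))_12 = Y_{1,12,2}Y_{12,2,11}/(y_2y_12·Y_{2,11,1}Y_{11,1,12}); (w(y))_2 = Y_{2,11,1}/(y_11·Y_{1,12,2}); (w(y))_3 = y_1y_3y_11·Y_{12,2,11}/Y_{11,1,12}; (w(y))_4 = y_2y_4y_12·Y_{11,1,12}/Y_{12,2,11}; (w(y))_i = y_i for i = 5,6,7,8; (w(y))_9 = y_1y_9y_12·Y_{2,11,1}/Y_{1,12,2};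 (w(y))_10 = y_2y_10y_11·Y_{1,12,2}/Y_{2,11,1}; (w(y))_11 = Y_{11,1,12}/(y_1·Y_{12,2,11}). -/
noncomputable section

/-- `Y_{i,j,k} = 1 + y_i + y_i y_j + y_i y_j y_k`. -/
def Yt3 (y : ZMod 12 → ℂ) (i j k : ZMod 12) : ℂ :=
  1 + y i + y i * y j + y i * y j * y k

/-!
Each `r_i` inverts two coordinates and multiplies four others by factors of the form
`y_a (1 + y_b) / (1 + y_a)`. The sums `1 + (r_i y)_j` that become denominators at the next step are
ratios of the polynomials `Y` and `1 + y_k`, by `1 + y_a + y_a y_b (1 + y_c) = Y_{a,b,c}` and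
`Y_{a,b,c} + y_b Y_{c,d,a} = (1 + y_a) Y_{b,c,d}`. So every denominator of `w(y)` is a product of
coordinates, `1 + y_1`, `1 + y_2` and four `Y`'s, which the genericity hypotheses make nonzero,
and the formulas are identities of rational functions. Indices live in `ZMod 12`: `y_12` is `y 0`.
-/

lemma rG_zero_apply (y : ZMod 12 → ℂ) (j : ZMod 12) :
    rG 0 y j = if j = 11 then y 11 * y 2 * (1 + y 1) / (1 + y 2)
      else if j = 0 then y 0 * y 1 * (1 + y 2) / (1 + y 1)
      else if j = 1 then 1 / y 2
      else if j = 2 then 1 / y 1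
      else if j = 3 then y 1 * y 3 * (1 + y 2) / (1 + y 1)
      else if j = 4 then y 2 * y 4 * (1 + y 1) / (1 + y 2)
      else y j :=
  rfl

lemma rG_five_apply (y : ZMod 12 → ℂ) (j : ZMod 12) :
    rG 5 y j = if j = 9 then y 9 * y 0 * (1 + y 11) / (1 + y 0)
      else if j = 10 then y 10 * y 11 * (1 + y 0) / (1 + y 11)
      else if j = 11 then 1 / y 0
      else if j = 0 then 1 / y 11
      else if j = 1 then y 11 * y 1 * (1 + y 0) / (1 + y 11)
      else if j = 2 then y 0 * y 2 * (1 + y 11) / (1 + y 0)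
      else y j :=
  rfl

lemma RG_zero_iff (y : ZMod 12 → ℂ) :
    RG 0 y ↔ (∀ j, y j ≠ 0) ∧ 1 + y 1 ≠ 0 ∧ 1 + y 2 ≠ 0 :=
  Iff.rfl

lemma RG_five_iff (y : ZMod 12 → ℂ) :
    RG 5 y ↔ (∀ j, y j ≠ 0) ∧ 1 + y 11 ≠ 0 ∧ 1 + y 0 ≠ 0 :=
  Iff.rfl

lemma Yt3_add_mul_Yt3 (y : ZMod 12 → ℂ) (a b c d : ZMod 12) :
    Yt3 y a b c + y b * Yt3 y c d a = (1 + y a) * Yt3 y b c d := by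
  unfold Yt3; ring

section

variable {y : ZMod 12 → ℂ}

lemma one_add_rG_zero_apply_eleven (h2 : 1 + y 2 ≠ 0) :
    1 + rG 0 y 11 = Yt3 y 2 11 1 / (1 + y 2) := by
  simp +decide only [rG_zero_apply, ↓reduceIte, Yt3]; field_simp; ring

lemma one_add_rG_zero_apply_zero (h1 : 1 + y 1 ≠ 0) :
    1 + rG 0 y 0 = Yt3 y 1 0 2 / (1 + y 1) := by
  simp +decide only [rG_zero_apply, ↓reduceIte, Yt3]; field_simp; ring

lemma Yt3_ne_zero_of_RG_five (h0 : RG 0 y) (h5 : RG 5 (rG 0 y)) :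
    Yt3 y 2 11 1 ≠ 0 ∧ Yt3 y 1 0 2 ≠ 0 := by
  obtain ⟨-, h1, h2⟩ := (RG_zero_iff y).mp h0
  obtain ⟨-, h11, h0⟩ := (RG_five_iff _).mp h5
  rw [one_add_rG_zero_apply_eleven h2, div_ne_zero_iff] at h11
  rw [one_add_rG_zero_apply_zero h1, div_ne_zero_iff] at h0
  exact ⟨h11.1, h0.1⟩

lemma rG_five_rG_zero_apply_one (h0 : RG 0 y) :
    rG 5 (rG 0 y) 1 = y 11 * Yt3 y 1 0 2 / Yt3 y 2 11 1 := by
  obtain ⟨hy, h1, h2⟩ := (RG_zero_iff y).mp h0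
  simp +decide only [rG_five_apply, ↓reduceIte]
  rw [one_add_rG_zero_apply_eleven h2, one_add_rG_zero_apply_zero h1]
  simp +decide only [rG_zero_apply, ↓reduceIte]
  field_simp [hy 2]

lemma rG_five_rG_zero_apply_two (h0 : RG 0 y) :
    rG 5 (rG 0 y) 2 = y 0 * Yt3 y 2 11 1 / Yt3 y 1 0 2 := by
  obtain ⟨hy, h1, h2⟩ := (RG_zero_iff y).mp h0
  simp +decide only [rG_five_apply, ↓reduceIte]
  rw [one_add_rG_zero_apply_eleven h2, one_add_rG_zero_apply_zero h1]
  simp +decide only [rG_zero_apply, ↓reduceIte]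
  field_simp [hy 1]

lemma one_add_rG_five_rG_zero_apply_one (h0 : RG 0 y) (hY : Yt3 y 2 11 1 ≠ 0) :
    1 + rG 5 (rG 0 y) 1 = (1 + y 2) * Yt3 y 11 1 0 / Yt3 y 2 11 1 := by
  rw [rG_five_rG_zero_apply_one h0, ← Yt3_add_mul_Yt3 y 2 11 1 0]; field_simp

lemma one_add_rG_five_rG_zero_apply_two (h0 : RG 0 y) (hY : Yt3 y 1 0 2 ≠ 0) :
    1 + rG 5 (rG 0 y) 2 = (1 + y 1) * Yt3 y 0 2 11 / Yt3 y 1 0 2 := by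
  rw [rG_five_rG_zero_apply_two h0, ← Yt3_add_mul_Yt3 y 1 0 2 11]; field_simp

lemma Yt3_ne_zero_of_RG_zero_rG_five (h0 : RG 0 y) (h5 : RG 5 (rG 0 y))
    (h0' : RG 0 (rG 5 (rG 0 y))) : Yt3 y 11 1 0 ≠ 0 ∧ Yt3 y 0 2 11 ≠ 0 := by
  obtain ⟨hY₁, hY₂⟩ := Yt3_ne_zero_of_RG_five h0 h5
  obtain ⟨-, h1, h2⟩ := (RG_zero_iff _).mp h0'
  rw [one_add_rG_five_rG_zero_apply_one h0 hY₁, div_ne_zero_iff, mul_ne_zero_iff] at h1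
  rw [one_add_rG_five_rG_zero_apply_two h0 hY₂, div_ne_zero_iff, mul_ne_zero_iff] at h2
  exact ⟨h1.1.2, h2.1.2⟩

end

theorem r0r5r0_formulas_general (y : ZMod 12 → ℂ)
    (h0 : RG 0 y) (h5 : RG 5 (rG 0 y)) (h0' : RG 0 (rG 5 (rG 0 y))) :
    let w := rG 0 (rG 5 (rG 0 y))
    w 1 * w 12 = Yt3 y 1 12 2 * Yt3 y 12 2 11 /
        (y 2 * y 12 * (Yt3 y 2 11 1 * Yt3 y 11 1 12)) ∧
    w 2 = Yt3 y 2 11 1 / (y 11 * Yt3 y 1 12 2) ∧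
    w 3 = y 1 * y 3 * y 11 * Yt3 y 12 2 11 / Yt3 y 11 1 12 ∧
    w 4 = y 2 * y 4 * y 12 * Yt3 y 11 1 12 / Yt3 y 12 2 11 ∧
    w 5 = y 5 ∧ w 6 = y 6 ∧ w 7 = y 7 ∧ w 8 = y 8 ∧
    w 9 = y 1 * y 9 * y 12 * Yt3 y 2 11 1 / Yt3 y 1 12 2 ∧
    w 10 = y 2 * y 10 * y 11 * Yt3 y 1 12 2 / Yt3 y 2 11 1 ∧
    w 11 = Yt3 y 11 1 12 / (y 1 * Yt3 y 12 2 11) := by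
  obtain ⟨hy, h1, h2⟩ := (RG_zero_iff y).mp h0
  obtain ⟨hY₁, hY₂⟩ := Yt3_ne_zero_of_RG_five h0 h5
  obtain ⟨hY₃, hY₄⟩ := Yt3_ne_zero_of_RG_zero_rG_five h0 h5 h0'
  intro w
  simp +decide only [w, show (12 : ZMod 12) = 0 from rfl, rG_zero_apply (rG 5 (rG 0 y)),
    ↓reduceIte]
  rw [one_add_rG_five_rG_zero_apply_one h0 hY₁, one_add_rG_five_rG_zero_apply_two h0 hY₂,
    rG_five_rG_zero_apply_one h0, rG_five_rG_zero_apply_two h0]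
  simp +decide only [rG_five_apply (rG 0 y), ↓reduceIte]
  rw [one_add_rG_zero_apply_eleven h2, one_add_rG_zero_apply_zero h1]
  simp +decide only [rG_zero_apply y, ↓reduceIte, true_and]
  refine ⟨?_, ?_, ?_, ?_, ?_, ?_, ?_⟩ <;> field_simp [hy]

/-- Explicit formulas for the coordinates of `w = r_0 ∘ r_5 ∘ r_0`
on a generic 12-tuple `y` of nonzero complex numbers. -/
theorem r0r5r0_formulas (y : ZMod 12 → ℂ) (hy : ∀ j, y j ≠ 0)
    (h0 : RG 0 y) (h5 : RG 5 (rG 0 y)) (h0' : RG 0 (rG 5 (rG 0 y))) :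
    let w := rG 0 (rG 5 (rG 0 y))
    w 1 * w 12 = Yt3 y 1 12 2 * Yt3 y 12 2 11 /
        (y 2 * y 12 * (Yt3 y 2 11 1 * Yt3 y 11 1 12)) ∧
    w 2 = Yt3 y 2 11 1 / (y 11 * Yt3 y 1 12 2) ∧
    w 3 = y 1 * y 3 * y 11 * Yt3 y 12 2 11 / Yt3 y 11 1 12 ∧
    w 4 = y 2 * y 4 * y 12 * Yt3 y 11 1 12 / Yt3 y 12 2 11 ∧
    w 5 = y 5 ∧ w 6 = y 6 ∧ w 7 = y 7 ∧ w 8 = y 8 ∧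
    w 9 = y 1 * y 9 * y 12 * Yt3 y 2 11 1 / Yt3 y 1 12 2 ∧
    w 10 = y 2 * y 10 * y 11 * Yt3 y 1 12 2 / Yt3 y 2 11 1 ∧
    w 11 = Yt3 y 11 1 12 / (y 1 * Yt3 y 12 2 11) :=
  r0r5r0_formulas_general y h0 h5 h0'
end
end

section
/- Let y_2, …, y_11, z be nonzero complex numbers with 1+z+zy_2 ≠ 0, 1+y_2+y_2y_11 ≠ 0 and 1+y_11+y_11z ≠ 0. For ε ≠ 0 substitute y_1 = ε and y_12 = z/ε into the expressions below (where Y_{i,j,k} = 1+y_i+y_iy_j+y_iy_jy_k). Then as ε → 0: Y_{1,12,2}Y_{12,2,11}/(y_2y_12·Y_{2,11,1}Y_{11,1,12}) → (1+z+zy_2)/(y_2(1+y_11+y_11z)); Y_{2,11,1}/(y_11·Y_{1,12,2}) → (1+y_2+y_2y_11)/(y_11(1+z+zy_2)); y_1y_3y_11·Y_{12,2,11}/Y_{11,1,12} → z·y_3y_11(1+y_2+y_2y_11)/(1+y_11+y_11z); y_2y_4y_12·Y_{11,1,12}/Y_{12,2,11} → y_2y_4(1+y_11+y_11z)/(1+y_2+y_2y_11);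 y_1y_9y_12·Y_{2,11,1}/Y_{1,12,2} → z·y_9(1+y_2+y_2y_11)/(1+z+zy_2); y_2y_10y_11·Y_{1,12,2}/Y_{2,11,1} → y_2y_10y_11(1+z+zy_2)/(1+y_2+y_2y_11); Y_{11,1,12}/(y_1·Y_{12,2,11}) → (1+y_11+y_11z)/(z(1+y_2+y_2y_11)). The limit values are exactly the coordinates of the simple reflection r_0 attached to the quiver Q_11 (with z playing the role of the Q_11 variable y_1 and Y_{i,j} = 1+y_i+y_iy_j): thus the confluence 12→1 reduces r_0r_5r_0 of the quiver Q_12 to r_0 of the quiver Q_11. -/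
open Filter Topology

/-- `Y_{i,j,k} = 1 + y_i + y_i y_j + y_i y_j y_k`, as a function of the three values. -/
def Yt (a b c : ℂ) : ℂ := 1 + a + a * b + a * b * c

private lemma aux_tendsto {f g : ℂ → ℂ} {L : ℂ} (heq : ∀ ε : ℂ, ε ≠ 0 → f ε = g ε)
    (hg : ContinuousAt g 0) (hL : g 0 = L) :
    Filter.Tendsto f (𝓝[≠] 0) (𝓝 L) := by
  have h : Filter.Tendsto g (𝓝[≠] 0) (𝓝 (g 0)) :=
    hg.tendsto.mono_left nhdsWithin_le_nhds
  rw [hL] at h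
  refine h.congr' ?_
  filter_upwards [self_mem_nhdsWithin] with ε hε
  exact (heq ε hε).symm

/-- The confluence `12 → 1` (substitute `y_1 = ε`, `y_12 = z/ε` and
let `ε → 0`) reduces the coordinates of `r_0 r_5 r_0` of the quiver `Q_12` to the
coordinates of the simple reflection `r_0` of the quiver `Q_11`. -/
theorem confluence_12_to_1_r0 (y2 y3 y4 y5 y6 y7 y8 y9 y10 y11 z : ℂ)
    (h2 : y2 ≠ 0) (h3 : y3 ≠ 0) (h4 : y4 ≠ 0) (h5 : y5 ≠ 0) (h6 : y6 ≠ 0)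
    (h7 : y7 ≠ 0) (h8 : y8 ≠ 0) (h9 : y9 ≠ 0) (h10 : y10 ≠ 0) (h11 : y11 ≠ 0)
    (hz : z ≠ 0)
    (hA : 1 + z + z * y2 ≠ 0) (hB : 1 + y2 + y2 * y11 ≠ 0) (hC : 1 + y11 + y11 * z ≠ 0) :
    Tendsto (fun ε : ℂ => Yt ε (z / ε) y2 * Yt (z / ε) y2 y11 /
        (y2 * (z / ε) * (Yt y2 y11 ε * Yt y11 ε (z / ε))))
      (𝓝[≠] 0) (𝓝 ((1 + z + z * y2) / (y2 * (1 + y11 + y11 * z)))) ∧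
    Tendsto (fun ε : ℂ => Yt y2 y11 ε / (y11 * Yt ε (z / ε) y2))
      (𝓝[≠] 0) (𝓝 ((1 + y2 + y2 * y11) / (y11 * (1 + z + z * y2)))) ∧
    Tendsto (fun ε : ℂ => ε * y3 * y11 * Yt (z / ε) y2 y11 / Yt y11 ε (z / ε))
      (𝓝[≠] 0) (𝓝 (z * y3 * y11 * (1 + y2 + y2 * y11) / (1 + y11 + y11 * z))) ∧
    Tendsto (fun ε : ℂ => y2 * y4 * (z / ε) * Yt y11 ε (z / ε) / Yt (z / ε) y2 y11)
      (𝓝[≠] 0) (𝓝 (y2 * y4 * (1 + y11 + y11 * z) / (1 + y2 + y2 * y11))) ∧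
    Tendsto (fun ε : ℂ => ε * y9 * (z / ε) * Yt y2 y11 ε / Yt ε (z / ε) y2)
      (𝓝[≠] 0) (𝓝 (z * y9 * (1 + y2 + y2 * y11) / (1 + z + z * y2))) ∧
    Tendsto (fun ε : ℂ => y2 * y10 * y11 * Yt ε (z / ε) y2 / Yt y2 y11 ε)
      (𝓝[≠] 0) (𝓝 (y2 * y10 * y11 * (1 + z + z * y2) / (1 + y2 + y2 * y11))) ∧
    Tendsto (fun ε : ℂ => Yt y11 ε (z / ε) / (ε * Yt (z / ε) y2 y11))
      (𝓝[≠] 0) (𝓝 ((1 + y11 + y11 * z) / (z * (1 + y2 + y2 * y11)))) := by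
  refine ⟨?_, ?_, ?_, ?_, ?_, ?_, ?_⟩
  · -- part 1
    apply aux_tendsto (g := fun ε : ℂ =>
        ((1 + z + z * y2) + ε) * (ε + z * (1 + y2 + y2 * y11)) /
          (y2 * z * (((1 + y2 + y2 * y11) + y2 * y11 * ε) * ((1 + y11 + y11 * z) + y11 * ε))))
    · intro ε hε
      rw [← mul_div_mul_left (Yt ε (z / ε) y2 * Yt (z / ε) y2 y11)
        (y2 * (z / ε) * (Yt y2 y11 ε * Yt y11 ε (z / ε))) hε]
      congr 1 <;> (simp only [Yt]; field_simp; try ring; try tauto)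
    · apply ContinuousAt.div (by fun_prop) (by fun_prop)
      simp only [mul_zero, add_zero]
      exact mul_ne_zero (mul_ne_zero h2 hz) (mul_ne_zero hB hC)
    · simp only [mul_zero, add_zero, zero_add]
      field_simp
  · -- part 2
    apply aux_tendsto (g := fun ε : ℂ =>
        ((1 + y2 + y2 * y11) + y2 * y11 * ε) / (y11 * ((1 + z + z * y2) + ε)))
    · intro ε hε
      congr 1 <;> (simp only [Yt]; field_simp; try ring; try tauto)
    · apply ContinuousAt.div (by fun_prop) (by fun_prop)
      simp only [mul_zero, add_zero]
      exact mul_ne_zero h11 hA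
    · simp only [mul_zero, add_zero]
  · -- part 3
    apply aux_tendsto (g := fun ε : ℂ =>
        y3 * y11 * (ε + z * (1 + y2 + y2 * y11)) / ((1 + y11 + y11 * z) + y11 * ε))
    · intro ε hε
      congr 1 <;> (simp only [Yt]; field_simp; try ring; try tauto)
    · apply ContinuousAt.div (by fun_prop) (by fun_prop)
      simp only [mul_zero, add_zero]
      exact hC
    · simp only [mul_zero, add_zero, zero_add]
      ring
  · -- part 4
    apply aux_tendsto (g := fun ε : ℂ =>
        y2 * y4 * z * ((1 + y11 + y11 * z) + y11 * ε) / (ε + z * (1 + y2 + y2 * y11)))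
    · intro ε hε
      rw [← mul_div_mul_left (y2 * y4 * (z / ε) * Yt y11 ε (z / ε)) (Yt (z / ε) y2 y11) hε]
      congr 1 <;> (simp only [Yt]; field_simp; try ring; try tauto)
    · apply ContinuousAt.div (by fun_prop) (by fun_prop)
      simp only [mul_zero, add_zero, zero_add]
      exact mul_ne_zero hz hB
    · simp only [mul_zero, add_zero, zero_add]
      field_simp
  · -- part 5
    apply aux_tendsto (g := fun ε : ℂ =>
        y9 * z * ((1 + y2 + y2 * y11) + y2 * y11 * ε) / ((1 + z + z * y2) + ε))
    · intro ε hε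
      congr 1 <;> (simp only [Yt]; field_simp; try ring; try tauto)
    · apply ContinuousAt.div (by fun_prop) (by fun_prop)
      simp only [mul_zero, add_zero]
      exact hA
    · simp only [mul_zero, add_zero]
      ring
  · -- part 6
    apply aux_tendsto (g := fun ε : ℂ =>
        y2 * y10 * y11 * ((1 + z + z * y2) + ε) / ((1 + y2 + y2 * y11) + y2 * y11 * ε))
    · intro ε hε
      congr 1 <;> (simp only [Yt]; field_simp; try ring; try tauto)
    · apply ContinuousAt.div (by fun_prop) (by fun_prop)
      simp only [mul_zero, add_zero]
      exact hB
    · simp only [mul_zero, add_zero]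
  · -- part 7
    apply aux_tendsto (g := fun ε : ℂ =>
        ((1 + y11 + y11 * z) + y11 * ε) / (ε + z * (1 + y2 + y2 * y11)))
    · intro ε hε
      congr 1 <;> (simp only [Yt]; field_simp; try ring; try tauto)
    · apply ContinuousAt.div (by fun_prop) (by fun_prop)
      simp only [mul_zero, add_zero, zero_add]
      exact mul_ne_zero hz hB
    · simp only [mul_zero, add_zero, zero_add]
end

section
/- Let y_2, …, y_11, z, ε be nonzero complex numbers, and substitute y_1 = ε and y_12 = z/ε into the simple roots of the quiver Q_12. Then, independently of ε: α_0α_5 = z·y_2y_11; α_i is unchanged for i = 1,2,3,4; β_0 = z·y_4y_5y_8y_9; β_1 = y_2y_3y_6y_7y_10y_11; and α_1^{-1}α_2^{-2}α_3^{-3}α_4^{-4}α_5^{-5}(β'_1)^5 = y_2^5y_4^4y_6^3y_8^2y_10/(y_3y_5^2y_7^3y_9^4y_11^5). In other words, with z playing the role of the Q_11 variable y_1, the Q_12 quantities (α_0α_5, α_1, α_2, α_3, α_4, β_0, β_1, α_1^{-1}α_2^{-2}α_3^{-3}α_4^{-4}α_5^{-5}(β'_1)^5) reduce under the confluence 12→1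 exactly to the Q_11 quantities (α_0, α_1, α_2, α_3, α_4, β_0, β_1, γ). -/
/-! Under the confluence, `y_1` and `y_12` enter `α_0 α_5` and `β_0` only through the
product `y_1 y_12 = z`, while in `α_5⁻⁵ (β'_1)⁵` the two fifth powers of `y_12` cancel. -/

theorem twisted_root_of_confluence {K : Type*} [Field K]
    (y2 y3 y4 y5 y6 y7 y8 y9 y10 y11 w : K) (hw : w ≠ 0) :
    (y3 * y4)⁻¹ * ((y5 * y6) ^ 2)⁻¹ * ((y7 * y8) ^ 3)⁻¹ * ((y9 * y10) ^ 4)⁻¹ *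
        ((y11 * w) ^ 5)⁻¹ * (y2 * y4 * y6 * y8 * y10 * w) ^ 5 =
      y2 ^ 5 * y4 ^ 4 * y6 ^ 3 * y8 ^ 2 * y10 /
        (y3 * y5 ^ 2 * y7 ^ 3 * y9 ^ 4 * y11 ^ 5) := by
  calc _ = w ^ 5 * (w ^ 5)⁻¹ * (y4 ^ 5 * (y4 ^ 1)⁻¹) * (y6 ^ 5 * (y6 ^ 2)⁻¹) *
        (y8 ^ 5 * (y8 ^ 3)⁻¹) * (y10 ^ 5 * (y10 ^ 4)⁻¹) * y2 ^ 5 /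
          (y3 * y5 ^ 2 * y7 ^ 3 * y9 ^ 4 * y11 ^ 5) := by ring
    _ = _ := by
      rw [mul_inv_cancel₀ (pow_ne_zero 5 hw), ← pow_sub_of_lt y4 (by norm_num),
        ← pow_sub_of_lt y6 (by norm_num), ← pow_sub_of_lt y8 (by norm_num),
        ← pow_sub_of_lt y10 (by norm_num)]
      ring

theorem confluence_12_to_1_roots_general (y2 y3 y4 y5 y6 y7 y8 y9 y10 y11 z ε : ℂ)
    (hz : z ≠ 0) (he : ε ≠ 0) :
    ε * y2 * (y11 * (z / ε)) = z * (y2 * y11) ∧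
    y3 * y4 = y3 * y4 ∧ y5 * y6 = y5 * y6 ∧ y7 * y8 = y7 * y8 ∧ y9 * y10 = y9 * y10 ∧
    ε * y4 * y5 * y8 * y9 * (z / ε) = z * (y4 * y5 * y8 * y9) ∧
    y2 * y3 * y6 * y7 * y10 * y11 = y2 * y3 * y6 * y7 * y10 * y11 ∧
    (y3 * y4)⁻¹ * ((y5 * y6) ^ 2)⁻¹ * ((y7 * y8) ^ 3)⁻¹ * ((y9 * y10) ^ 4)⁻¹ *
        ((y11 * (z / ε)) ^ 5)⁻¹ * (y2 * y4 * y6 * y8 * y10 * (z / ε)) ^ 5 =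
      y2 ^ 5 * y4 ^ 4 * y6 ^ 3 * y8 ^ 2 * y10 /
        (y3 * y5 ^ 2 * y7 ^ 3 * y9 ^ 4 * y11 ^ 5) :=
  ⟨by field_simp, rfl, rfl, rfl, rfl, by field_simp, rfl,
    twisted_root_of_confluence _ _ _ _ _ _ _ _ _ _ _ (div_ne_zero hz he)⟩

/-- Under the substitution `y_1 = ε`, `y_12 = z/ε` (the confluence
`12 → 1`), the `Q_12` quantities `(α_0α_5, α_1, α_2, α_3, α_4, β_0, β_1,
α_1⁻¹α_2⁻²α_3⁻³α_4⁻⁴α_5⁻⁵(β'_1)⁵)` reduce, independently of `ε`, exactly to the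
`Q_11` quantities `(α_0, α_1, α_2, α_3, α_4, β_0, β_1, γ)` (with `z` playing the role
of the `Q_11` variable `y_1`). -/
theorem confluence_12_to_1_roots (y2 y3 y4 y5 y6 y7 y8 y9 y10 y11 z ε : ℂ)
    (h2 : y2 ≠ 0) (h3 : y3 ≠ 0) (h4 : y4 ≠ 0) (h5 : y5 ≠ 0) (h6 : y6 ≠ 0)
    (h7 : y7 ≠ 0) (h8 : y8 ≠ 0) (h9 : y9 ≠ 0) (h10 : y10 ≠ 0) (h11 : y11 ≠ 0)
    (hz : z ≠ 0) (he : ε ≠ 0) :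
    ε * y2 * (y11 * (z / ε)) = z * (y2 * y11) ∧
    y3 * y4 = y3 * y4 ∧ y5 * y6 = y5 * y6 ∧ y7 * y8 = y7 * y8 ∧ y9 * y10 = y9 * y10 ∧
    ε * y4 * y5 * y8 * y9 * (z / ε) = z * (y4 * y5 * y8 * y9) ∧
    y2 * y3 * y6 * y7 * y10 * y11 = y2 * y3 * y6 * y7 * y10 * y11 ∧
    (y3 * y4)⁻¹ * ((y5 * y6) ^ 2)⁻¹ * ((y7 * y8) ^ 3)⁻¹ * ((y9 * y10) ^ 4)⁻¹ *
        ((y11 * (z / ε)) ^ 5)⁻¹ * (y2 * y4 * y6 * y8 * y10 * (z / ε)) ^ 5 =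
      y2 ^ 5 * y4 ^ 4 * y6 ^ 3 * y8 ^ 2 * y10 /
        (y3 * y5 ^ 2 * y7 ^ 3 * y9 ^ 4 * y11 ^ 5) :=
  confluence_12_to_1_roots_general y2 y3 y4 y5 y6 y7 y8 y9 y10 y11 z ε hz he
end

section
/- Fix complex numbers q ≠ 1, α_0, α_1, α_2, α_3 and t. For ε ≠ 0 let M_ε be the 3×3 matrix obtained from the coefficient matrix (A_0 + tA_1)/(1−t) of the linear q-difference system of the q-Garnier system of fourth order by substituting α_0 := ε, α_5 := α_0/ε and t := εt, and let Λ_ε = diag(1, −ε(1−q), −ε(1−q)). Then the entrywise limit lim_{ε→0} Λ_ε·M_ε·Λ_ε^{-1} exists and equals B_0 + tB_1, where B_0 = [[1, 0, 0], [(1−q)α_0, α_0, 0], [(1−q)α_0, α_0(1−α_1), α_0α_1α_2]] and B_1 = [[−α_0, −α_0(1−α_1)/(1−q), −α_0α_1α_2(1−α_3)/(1−q)], [0,0,0], [0,0,0]]. (Thus the linear q-difference system of the degenerate q-Garnier system attached to the quiver Q_11 is obtained from that of the q-Garnier system by this confluence procedure.) -/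
open Filter Topology Matrix

noncomputable section

/-- The matrix `A₀` of the linear `q`-difference system of the `q`-Garnier system of
fourth order. -/
def A0m (a0 a1 a2 a5 : ℂ) : Matrix (Fin 3) (Fin 3) ℂ :=
  !![1, 0, 0;
     1 - a5, a0 * a5, 0;
     1 - a5, a0 * a5 * (1 - a1), a0 * a1 * a2 * a5]

/-- The matrix `A₁` of the linear `q`-difference system of the `q`-Garnier system of
fourth order. -/
def A1m (a0 a1 a2 a3 a5 : ℂ) : Matrix (Fin 3) (Fin 3) ℂ :=
  !![-a5, a0 * a5 * (1 - a1), a0 * a1 * a2 * a5 * (1 - a3);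
     0, -(a0 * a1 * a5), a0 * a1 * a2 * a5 * (1 - a3);
     0, 0, -(a0 * a1 * a2 * a3 * a5)]

/-- The matrix `B₀` of the linear `q`-difference system attached to the quiver `Q_11`. -/
def B0m (q a0 a1 a2 : ℂ) : Matrix (Fin 3) (Fin 3) ℂ :=
  !![1, 0, 0;
     (1 - q) * a0, a0, 0;
     (1 - q) * a0, a0 * (1 - a1), a0 * a1 * a2]

/-- The matrix `B₁` of the linear `q`-difference system attached to the quiver `Q_11`. -/
def B1m (q a0 a1 a2 a3 : ℂ) : Matrix (Fin 3) (Fin 3) ℂ :=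
  !![-a0, -(a0 * (1 - a1) / (1 - q)), -(a0 * a1 * a2 * (1 - a3) / (1 - q));
     0, 0, 0;
     0, 0, 0]

/-! Conjugating `A₀ + εt A₁` (after the substitution) by `Λ_ε` gives, for every `ε ≠ 0`,
a matrix that is affine in `ε`: exactly `B₀ + tB₁ + ε C` for an explicit constant matrix `C`.
The scalar factor `(1 - εt)⁻¹` commutes with the conjugation and tends to `1`, so the limit
is `B₀ + tB₁`. -/

theorem Matrix.diagonal_mul_mul_inv_diagonal {n K : Type*} [Fintype n] [DecidableEq n] [Field K]
    {d : n → K} (hd : ∀ i, d i ≠ 0) (M : Matrix n n K) :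
    diagonal d * M * (diagonal d)⁻¹ = of fun i j => d i * M i j / d j := by
  have hunit : IsUnit d := Pi.isUnit_iff.mpr fun i => (hd i).isUnit
  ext i j
  rw [inv_diagonal, Ring.inverse_of_isUnit hunit]
  simp [diagonal_mul, mul_diagonal, div_eq_mul_inv]

def confluenceCorrection (q a0 a1 a2 a3 t : ℂ) : Matrix (Fin 3) (Fin 3) ℂ :=
  !![0, 0, 0;
     -(1 - q), -(t * a0 * a1), t * a0 * a1 * a2 * (1 - a3);
     -(1 - q), 0, -(t * a0 * a1 * a2 * a3)]

theorem diagonal_conj_garnier_coeff_eq {q : ℂ} (hq : q ≠ 1) (a0 a1 a2 a3 t : ℂ) {ε : ℂ}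
    (hε : ε ≠ 0) :
    diagonal ![1, -(ε * (1 - q)), -(ε * (1 - q))] *
        (A0m ε a1 a2 (a0 / ε) + (ε * t) • A1m ε a1 a2 a3 (a0 / ε)) *
        (diagonal ![1, -(ε * (1 - q)), -(ε * (1 - q))])⁻¹ =
      B0m q a0 a1 a2 + t • B1m q a0 a1 a2 a3 + ε • confluenceCorrection q a0 a1 a2 a3 t := by
  have hq' : (1 : ℂ) - q ≠ 0 := sub_ne_zero.mpr hq.symm
  rw [diagonal_mul_mul_inv_diagonal]
  · ext i j
    fin_cases i <;> fin_cases j <;>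
      simp [A0m, A1m, B0m, B1m, confluenceCorrection] <;> field_simp <;> ring
  · intro i
    fin_cases i <;> simp [hε, hq']

/-- Substituting `α_0 := ε`, `α_5 := α_0/ε`, `t := εt` into the
coefficient matrix `(A₀ + tA₁)/(1-t)` of the linear `q`-difference system of the
`q`-Garnier system and conjugating by `Λ_ε = diag(1, -ε(1-q), -ε(1-q))`, the entrywise
limit as `ε → 0` exists and equals `B₀ + tB₁`, the coefficient matrix attached to the
quiver `Q_11`. -/
theorem confluence_linear_system_Q12_to_Q11 (q a0 a1 a2 a3 t : ℂ) (hq : q ≠ 1) :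
    Tendsto
      (fun ε : ℂ =>
        Matrix.diagonal ![1, -(ε * (1 - q)), -(ε * (1 - q))] *
          ((1 - ε * t)⁻¹ • (A0m ε a1 a2 (a0 / ε) + (ε * t) • A1m ε a1 a2 a3 (a0 / ε))) *
          (Matrix.diagonal ![1, -(ε * (1 - q)), -(ε * (1 - q))])⁻¹)
      (𝓝[≠] (0 : ℂ))
      (𝓝 (B0m q a0 a1 a2 + t • B1m q a0 a1 a2 a3)) := by
  set B := B0m q a0 a1 a2 + t • B1m q a0 a1 a2 a3
  set C := confluenceCorrection q a0 a1 a2 a3 t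
  have hcont : ContinuousAt (fun ε : ℂ => (1 - ε * t)⁻¹ • (B + ε • C)) 0 := by
    fun_prop (disch := simp)
  have hlim :
      Tendsto (fun ε : ℂ => (1 - ε * t)⁻¹ • (B + ε • C)) (𝓝[≠] 0) (𝓝 B) := by
    simpa using hcont.tendsto.mono_left nhdsWithin_le_nhds
  refine hlim.congr' ?_
  filter_upwards [self_mem_nhdsWithin] with ε hε
  rw [Matrix.mul_smul, Matrix.smul_mul, diagonal_conj_garnier_coeff_eq hq a0 a1 a2 a3 t hε]
end
end

section
/- Fix complex numbers q ≠ 1, α_0, α_1, α_2 and t. For ε ≠ 0 let N_ε be the 3×3 matrix obtained from B_0 + tB_1 (the coefficient matrix of the linear q-difference system attached to the quiver Q_11, with parameters α_0, α_1, α_2, α_3) by substituting α_1 := α_1/ε, α_2 := ε, α_3 := α_2 and t := εt, and let Λ_ε = diag(1, 1, −ε(1−q)). Then the entrywise limit lim_{ε→0} Λ_ε·N_ε·Λ_ε^{-1} exists and equals C_0 + tC_1, where C_0 = [[1, 0, 0], [(1−q)α_0, α_0, 0], [0, (1−q)α_0α_1, α_0α_1]] and C_1 = [[0, α_0α_1/(1−q),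 α_0α_1(1−α_2)/(1−q)²], [0,0,0], [0,0,0]]. (Thus the linear q-difference system of the degenerate q-Garnier system attached to the quiver Q_101 is obtained from that attached to Q_11 by this confluence procedure.) -/
/-! For `ε ≠ 0` the conjugated matrix is exactly `C₀ + tC₁ + ε R` with `R` independent of `ε`:
the only negative power of `ε`, coming from `α₁/ε` in the `(3,2)` entry, is cancelled by the
factor `-ε(1-q)` of `Λ_ε`, and the `ε` of `t := εt` in the `(1,3)` entry is divided out by it.
Letting `ε → 0` kills `ε R`. -/

open Filter Topology Matrix

noncomputable section

/-- The matrix `C₀` of the linear `q`-difference system attached to the quiver `Q_101`. -/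
def C0m (q a0 a1 : ℂ) : Matrix (Fin 3) (Fin 3) ℂ :=
  !![1, 0, 0;
     (1 - q) * a0, a0, 0;
     0, (1 - q) * a0 * a1, a0 * a1]

/-- The matrix `C₁` of the linear `q`-difference system attached to the quiver `Q_101`. -/
def C1m (q a0 a1 a2 : ℂ) : Matrix (Fin 3) (Fin 3) ℂ :=
  !![0, a0 * a1 / (1 - q), a0 * a1 * (1 - a2) / (1 - q) ^ 2;
     0, 0, 0;
     0, 0, 0]

theorem Matrix.inv_diagonal_of_ne_zero {n K : Type*} [Fintype n] [DecidableEq n] [Field K]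
    {d : n → K} (hd : ∀ i, d i ≠ 0) : (diagonal d)⁻¹ = diagonal d⁻¹ :=
  inv_eq_right_inv <| by
    rw [diagonal_mul_diagonal, ← diagonal_one]
    exact congrArg diagonal (funext fun i => mul_inv_cancel₀ (hd i))

theorem Matrix.diagonal_mul_mul_inv_diagonal_apply {n K : Type*} [Fintype n] [DecidableEq n]
    [Field K] {d : n → K} (hd : ∀ i, d i ≠ 0) (M : Matrix n n K) (i j : n) :
    (diagonal d * M * (diagonal d)⁻¹) i j = d i * M i j / d j := by
  rw [inv_diagonal_of_ne_zero hd, mul_diagonal, diagonal_mul, Pi.inv_apply, div_eq_mul_inv]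

def confluenceRemainder (q a0 t : ℂ) : Matrix (Fin 3) (Fin 3) ℂ :=
  !![-(t * a0), -(t * a0 / (1 - q)), 0;
     0, 0, 0;
     -((1 - q) ^ 2 * a0), -((1 - q) * a0), 0]

theorem conj_B_Q11_substituted_eq (q a0 a1 a2 t : ℂ) (hq : q ≠ 1) {ε : ℂ} (hε : ε ≠ 0) :
    diagonal ![1, 1, -(ε * (1 - q))] *
        (B0m q a0 (a1 / ε) ε + (ε * t) • B1m q a0 (a1 / ε) ε a2) *
        (diagonal ![1, 1, -(ε * (1 - q))])⁻¹ =
      C0m q a0 a1 + t • C1m q a0 a1 a2 + ε • confluenceRemainder q a0 t := by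
  have hq' : (1 : ℂ) - q ≠ 0 := sub_ne_zero.mpr hq.symm
  have hd : ∀ i, ![1, 1, -(ε * (1 - q))] i ≠ 0 := by
    intro i; fin_cases i <;> simp [hε, hq']
  ext i j
  rw [diagonal_mul_mul_inv_diagonal_apply hd]
  fin_cases i <;> fin_cases j <;>
    simp [B0m, B1m, C0m, C1m, confluenceRemainder] <;> field_simp <;> ring

/-- Substituting `α_1 := α_1/ε`, `α_2 := ε`, `α_3 := α_2`, `t := εt`
into the coefficient matrix `B₀ + tB₁` of the linear `q`-difference system attached to
the quiver `Q_11` and conjugating by `Λ_ε = diag(1, 1, -ε(1-q))`, the entrywise limit as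
`ε → 0` exists and equals `C₀ + tC₁`, the coefficient matrix attached to the quiver
`Q_101`. -/
theorem confluence_linear_system_Q11_to_Q101 (q a0 a1 a2 t : ℂ) (hq : q ≠ 1) :
    Tendsto
      (fun ε : ℂ =>
        Matrix.diagonal ![1, 1, -(ε * (1 - q))] *
          (B0m q a0 (a1 / ε) ε + (ε * t) • B1m q a0 (a1 / ε) ε a2) *
          (Matrix.diagonal ![1, 1, -(ε * (1 - q))])⁻¹)
      (𝓝[≠] (0 : ℂ))
      (𝓝 (C0m q a0 a1 + t • C1m q a0 a1 a2)) := by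
  have hlim : Tendsto (fun ε : ℂ => C0m q a0 a1 + t • C1m q a0 a1 a2 +
      ε • confluenceRemainder q a0 t) (𝓝 0) (𝓝 (C0m q a0 a1 + t • C1m q a0 a1 a2)) := by
    simpa using tendsto_const_nhds.add
      ((tendsto_id (x := 𝓝 (0 : ℂ))).smul_const (confluenceRemainder q a0 t))
  exact (hlim.mono_left nhdsWithin_le_nhds).congr' <| eventually_nhdsWithin_of_forall
    fun ε hε => (conj_B_Q11_substituted_eq q a0 a1 a2 t hq hε).symm
end
end
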